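/- arXiv:1703.09015 — 9 statements merged into one kernel-verified Lean document; each statement's English description precedes it below -/
import Mathlib

section
/- For every ε with 0 < ε < 1, every arithmetic progression contained in the middle-ε Cantor set M_ε has length at most 1/ε + 1; that is, if a ∈ ℝ, t > 0, k ≥ 2 is an integer, and a + i·t ∈ M_ε for all integers 0 ≤ i < k, then k − 1 ≤ 1/ε. -/
/-- The middle-`ε` Cantor set. -/
noncomputable def middleCantor (ε : ℝ) : Set ℝ :=
  {x | ∃ b : ℕ → Bool,
    x = (1 - (1 - ε) / 2) * ∑' n : ℕ, (if b n then ((1 - ε) / 2) ^ n else 0)}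

/-!
Write `λ = (1 - ε) / 2`. The set `M_ε` lies in `[0, 1]` and is the union of its two copies `λ M_ε`
and `1 - λ + λ M_ε`, separated by the gap `(λ, 1 - λ)` of length `ε`. An arithmetic progression in
`M_ε` either lies in one copy, and then blowing it up by `1 / λ` gives a progression in `M_ε` with
step `t / λ`, or it jumps over the gap, and then its step is at least `ε`. A progression of length
`k ≥ 2` in `[0, 1]` has step at most `1`, so after finitely many blow-ups the step `t'` is at
least `ε`, and `(k - 1) t' ≤ 1` gives `k - 1 ≤ 1 / ε`.
-/

open Set

lemma sub_mul_le_of_forall_add_mul_mem_Icc {a t u v : ℝ} {k : ℕ} (hk : 1 ≤ k)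
    (hAP : ∀ i < k, a + i * t ∈ Icc u v) : ((k : ℝ) - 1) * t ≤ v - u := by
  have hfirst := hAP 0 (by omega)
  have hlast := hAP (k - 1) (by omega)
  rw [Nat.cast_sub hk, Nat.cast_one] at hlast
  simp only [CharP.cast_eq_zero, zero_mul, add_zero, mem_Icc] at hfirst hlast
  linarith

lemma sub_le_of_forall_add_mul_notMem_Ioo {a t u v : ℝ} {k i j : ℕ} (ht : 0 < t)
    (hgap : ∀ n < k, a + n * t ∉ Ioo u v) (hj : j < k)
    (hu : a + i * t ≤ u) (hv : v ≤ a + j * t) : v - u ≤ t := by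
  by_contra! hlt
  have hij : i ≤ j := by
    by_contra! hji
    have : (j : ℝ) * t ≤ i * t := by gcongr
    linarith
  have hbelow : ∀ n, i ≤ n → n < k → a + n * t ≤ u := by
    intro n hin
    induction n, hin using Nat.le_induction with
    | base => exact fun _ => hu
    | succ n _ ih =>
      intro hn
      have hnext : a + ((n + 1 : ℕ) : ℝ) * t < v := by
        push_cast
        linarith [ih (by omega)]
      by_contra! hgt
      exact hgap (n + 1) hn ⟨hgt, hnext⟩
  linarith [hbelow j hij hj]

section middleCantor

variable {ε x : ℝ}

lemma summable_middleCantor_digits (h₀ : -1 < ε) (h₁ : ε ≤ 1) (b : ℕ → Bool) :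
    Summable fun n : ℕ => if b n then ((1 - ε) / 2) ^ n else 0 := by
  have hl : 0 ≤ (1 - ε) / 2 := by linarith
  refine (summable_geometric_of_lt_one hl (by linarith)).of_nonneg_of_le
    (fun n => by split <;> positivity) (fun n => ?_)
  split
  · exact le_rfl
  · positivity

lemma middleCantor_subset_Icc (h₀ : -1 < ε) (h₁ : ε ≤ 1) : middleCantor ε ⊆ Icc 0 1 := by
  rintro _ ⟨b, rfl⟩
  have hl₀ : 0 ≤ (1 - ε) / 2 := by linarith
  have hl₁ : (1 - ε) / 2 < 1 := by linarith
  set l := (1 - ε) / 2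
  have hdigit_nonneg (n : ℕ) : 0 ≤ if b n then l ^ n else 0 := by split <;> positivity
  have hsum_le : ∑' n, (if b n then l ^ n else 0) ≤ (1 - l)⁻¹ := by
    rw [← tsum_geometric_of_lt_one hl₀ hl₁]
    refine (summable_middleCantor_digits h₀ h₁ b).tsum_le_tsum (fun n => ?_)
      (summable_geometric_of_lt_one hl₀ hl₁)
    split
    · exact le_rfl
    · positivity
  constructor
  · exact mul_nonneg (by linarith) (tsum_nonneg hdigit_nonneg)
  · calc (1 - l) * ∑' n, (if b n then l ^ n else 0) ≤ (1 - l) * (1 - l)⁻¹ := by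
          gcongr
      _ = 1 := mul_inv_cancel₀ (by linarith)

lemma exists_mem_middleCantor_eq_or_eq (h₀ : -1 < ε) (h₁ : ε ≤ 1)
    (hx : x ∈ middleCantor ε) :
    ∃ y ∈ middleCantor ε,
      x = (1 - ε) / 2 * y ∨ x = 1 - (1 - ε) / 2 + (1 - ε) / 2 * y := by
  obtain ⟨b, rfl⟩ := hx
  set l := (1 - ε) / 2
  set S := ∑' n, (if b (n + 1) then l ^ n else 0)
  have hshift : ∑' n, (if b n then l ^ n else 0) = (if b 0 then 1 else 0) + l * S := by
    rw [(summable_middleCantor_digits h₀ h₁ b).tsum_eq_zero_add, pow_zero, ← tsum_mul_left]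
    congr 2 with n
    split <;> ring
  refine ⟨(1 - l) * S, ⟨fun n => b (n + 1), rfl⟩, ?_⟩
  rw [hshift]
  cases b 0
  · left; simp only [Bool.false_eq_true, if_false]; ring
  · right; simp only [if_true]; ring

lemma middleCantor_notMem_Ioo (h₀ : -1 < ε) (h₁ : ε ≤ 1) (hx : x ∈ middleCantor ε) :
    x ∉ Ioo ((1 - ε) / 2) (1 - (1 - ε) / 2) := by
  obtain ⟨y, hy, rfl | rfl⟩ := exists_mem_middleCantor_eq_or_eq h₀ h₁ hx <;>
  · have hy01 := middleCantor_subset_Icc h₀ h₁ hy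
    rintro ⟨hlo, hhi⟩
    nlinarith [hy01.1, hy01.2]

lemma div_mem_middleCantor (h₀ : 0 < ε) (h₁ : ε < 1) (hx : x ∈ middleCantor ε)
    (hle : x ≤ (1 - ε) / 2) : x / ((1 - ε) / 2) ∈ middleCantor ε := by
  obtain ⟨y, hy, rfl | rfl⟩ := exists_mem_middleCantor_eq_or_eq (by linarith) h₁.le hx
  · rwa [mul_div_cancel_left₀ _ (by linarith)]
  · nlinarith [(middleCantor_subset_Icc (by linarith) h₁.le hy).1]

lemma sub_div_mem_middleCantor (h₀ : 0 < ε) (h₁ : ε < 1) (hx : x ∈ middleCantor ε)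
    (hge : 1 - (1 - ε) / 2 ≤ x) :
    (x - (1 - (1 - ε) / 2)) / ((1 - ε) / 2) ∈ middleCantor ε := by
  obtain ⟨y, hy, rfl | rfl⟩ := exists_mem_middleCantor_eq_or_eq (by linarith) h₁.le hx
  · nlinarith [(middleCantor_subset_Icc (by linarith) h₁.le hy).2]
  · rwa [add_sub_cancel_left, mul_div_cancel_left₀ _ (by linarith)]

lemma exists_arithProg_middleCantor_le_step (h₀ : 0 < ε) (h₁ : ε < 1) {k : ℕ} (hk : 2 ≤ k)
    (n : ℕ) {a t : ℝ} (hn : ((1 - ε) / 2) ^ n < t)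
    (hAP : ∀ i < k, a + i * t ∈ middleCantor ε) :
    ∃ a' t', ε ≤ t' ∧ ∀ i < k, a' + i * t' ∈ middleCantor ε := by
  induction n generalizing a t with
  | zero =>
    have hspan := sub_mul_le_of_forall_add_mul_mem_Icc (by omega)
      fun i hi => middleCantor_subset_Icc (by linarith) h₁.le (hAP i hi)
    have hk' : (1 : ℝ) ≤ (k : ℝ) - 1 := by
      have : (2 : ℝ) ≤ k := by exact_mod_cast hk
      linarith
    rw [pow_zero] at hn
    nlinarith
  | succ n ih =>
    set l := (1 - ε) / 2 with hl_def
    have hl : 0 < l := by linarith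
    have hn' : l ^ n < t / l := by rwa [lt_div_iff₀ hl, ← pow_succ]
    by_cases hleft : ∀ i < k, a + i * t ≤ l
    · refine ih (a := a / l) hn' fun i hi => ?_
      have := div_mem_middleCantor h₀ h₁ (hAP i hi) (hleft i hi)
      rwa [add_div, mul_div_assoc] at this
    by_cases hright : ∀ i < k, 1 - l ≤ a + i * t
    · refine ih (a := (a - (1 - l)) / l) hn' fun i hi => ?_
      have := sub_div_mem_middleCantor h₀ h₁ (hAP i hi) (hright i hi)
      convert this using 1
      ring
    push Not at hleft hright
    obtain ⟨j, hj, hj_gt⟩ := hleft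
    obtain ⟨i, hi, hi_lt⟩ := hright
    have hgap (m : ℕ) (hm : m < k) : a + m * t ∉ Ioo l (1 - l) :=
      middleCantor_notMem_Ioo (by linarith) h₁.le (hAP m hm)
    have hi_left : a + i * t ≤ l := by
      by_contra! h
      exact hgap i hi ⟨h, hi_lt⟩
    have hj_right : 1 - l ≤ a + j * t := by
      by_contra! h
      exact hgap j hj ⟨hj_gt, h⟩
    have ht : 0 < t := lt_trans (pow_pos hl _) hn
    have hstep := sub_le_of_forall_add_mul_notMem_Ioo ht hgap hj hi_left hj_right
    exact ⟨a, t, by linarith, hAP⟩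

end middleCantor

theorem stmt1 (ε : ℝ) (hε0 : 0 < ε) (hε1 : ε < 1)
    (a t : ℝ) (ht : 0 < t) (k : ℕ) (hk : 2 ≤ k)
    (hAP : ∀ i : ℕ, i < k → a + i * t ∈ middleCantor ε) :
    (k : ℝ) - 1 ≤ 1 / ε := by
  obtain ⟨n, hn⟩ := exists_pow_lt_of_lt_one ht (by linarith : (1 - ε) / 2 < 1)
  obtain ⟨a', t', hεt', hAP'⟩ := exists_arithProg_middleCantor_le_step hε0 hε1 hk n hn hAP
  have ht' : 0 < t' := hε0.trans_le hεt'
  have hspan := sub_mul_le_of_forall_add_mul_mem_Icc (by omega)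
    fun i hi => middleCantor_subset_Icc (by linarith) hε1.le (hAP' i hi)
  calc (k : ℝ) - 1 ≤ 1 / t' := by rw [le_div_iff₀ ht']; linarith
    _ ≤ 1 / ε := one_div_le_one_div_of_le hε0 hεt'
end

section
/- There exist n₀ ∈ ℕ and K > 0 such that for every integer n ≥ n₀, the set F_n contains an arithmetic progression of length at least n/(K·log n); that is, there exist a ∈ ℝ and t > 0 such that a + i·t ∈ F_n for every integer i with 0 ≤ i < n/(K·log n). -/
/-- The Gauss map `x ↦ {1/x}`. -/
noncomputable def gaussMap (x : ℝ) : ℝ := Int.fract (1 / x)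

/-- `Fset n` is the set of irrational numbers in `(0,1)` all of whose continued
fraction partial quotients are at most `n`. The `(k+1)`-st partial quotient of `x`
is `⌊1 / G^[k] x⌋` where `G` is the Gauss map. -/
noncomputable def Fset (n : ℕ) : Set ℝ :=
  {x | Irrational x ∧ x ∈ Set.Ioo (0 : ℝ) 1 ∧
    ∀ k : ℕ, ⌊1 / (gaussMap^[k] x)⌋ ≤ (n : ℤ)}

/-!
Let `ψ = (1 - √5) / 2` and `v = ⌊n / 3⌋`. The points `(i - ψ) / v`, `0 ≤ i < v`, form an arithmetic
progression in `(0, 1)` of length `v`, which exceeds `n / (6 log n)`. Since `(qφ - p)(qψ - p)` is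
a nonzero integer, `q |qψ - p| > 1 / 3` for all `q ≥ 1`, hence `q |qy - p| > 1 / (3v) ≥ 1 / n` for
every point `y` of the progression. Along the Gauss map orbit `xₖ = G^[k] y` one has
`qₖ |qₖ y - pₖ| ≤ xₖ` for the convergents `pₖ / qₖ`, so every partial quotient `⌊1 / xₖ⌋` is at
most `n`.
-/

open Real
open scoped goldenRatio

lemma gaussMap_eq (x : ℝ) : gaussMap x = 1 / x - ⌊1 / x⌋ := rfl

lemma irrational_gaussMap {x : ℝ} (hx : Irrational x) : Irrational (gaussMap x) := by
  rw [gaussMap_eq, one_div]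
  exact hx.inv.sub_intCast _

lemma gaussMap_mem_Ioo {x : ℝ} (hx : Irrational x) : gaussMap x ∈ Set.Ioo 0 1 :=
  ⟨(Int.fract_nonneg _).lt_of_ne (by exact_mod_cast ((irrational_gaussMap hx).ne_int 0).symm),
    Int.fract_lt_one _⟩

/-- For `x = G^[k] y`, the pairs `(a, b)` and `(c, d)` play the role of `(qₖ, pₖ)` and
`(qₖ₋₁, pₖ₋₁)` for consecutive convergents `pₖ / qₖ` of `y`, and `y = (b + d x) / (a + c x)`. -/
def IsRemainder (y x : ℝ) : Prop :=
  ∃ a b c d : ℤ, 1 ≤ a ∧ 0 ≤ c ∧ |a * d - b * c| = 1 ∧ y * (a + c * x) = b + d * x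

lemma isRemainder_self (y : ℝ) : IsRemainder y y :=
  ⟨1, 0, 0, 1, le_rfl, le_rfl, by norm_num, by push_cast; ring⟩

lemma isRemainder_gaussMap {y x : ℝ} (h : IsRemainder y x) (hx : x ∈ Set.Ioo 0 1) :
    IsRemainder y (gaussMap x) := by
  obtain ⟨a, b, c, d, ha, hc, hdet, hy⟩ := h
  have hm : 1 ≤ ⌊1 / x⌋ := by
    rw [Int.le_floor, Int.cast_one, le_div_iff₀ hx.1]
    linarith [hx.2]
  have hx' : x * (⌊1 / x⌋ + gaussMap x) = 1 := by
    rw [gaussMap_eq]; field_simp [hx.1.ne']; ring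
  refine ⟨a * ⌊1 / x⌋ + c, b * ⌊1 / x⌋ + d, a, b, by nlinarith, by omega, ?_, ?_⟩
  · rw [← hdet, ← abs_neg]; ring_nf
  · push_cast
    linear_combination (⌊1 / x⌋ + gaussMap x) * hy + (d - y * c) * hx'

lemma IsRemainder.exists_mul_abs_sub_le {y x : ℝ} (h : IsRemainder y x) (hx : 0 < x) :
    ∃ q p : ℤ, 0 < q ∧ q * |q * y - p| ≤ x := by
  obtain ⟨a, b, c, d, ha, hc, hdet, hy⟩ := h
  have ha' : (1 : ℝ) ≤ a := by exact_mod_cast ha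
  have hc' : (0 : ℝ) ≤ c := by exact_mod_cast hc
  have hden : 0 < (a : ℝ) + c * x := by positivity
  have habs : |(a : ℝ) * y - b| * (a + c * x) = x := by
    have hdet' : |(a : ℝ) * d - b * c| = 1 := by exact_mod_cast hdet
    calc |(a : ℝ) * y - b| * (a + c * x) = |((a : ℝ) * y - b) * (a + c * x)| := by
          rw [abs_mul, abs_of_pos hden]
      _ = |((a : ℝ) * d - b * c) * x| := by congr 1; linear_combination a * hy
      _ = x := by rw [abs_mul, hdet', one_mul, abs_of_pos hx]
  refine ⟨a, b, by omega, ?_⟩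
  nlinarith [abs_nonneg ((a : ℝ) * y - b), mul_nonneg hc' hx.le]

lemma irrational_gaussMap_iterate {y : ℝ} (hy : Irrational y) (k : ℕ) :
    Irrational (gaussMap^[k] y) := by
  induction k with
  | zero => exact hy
  | succ k ih => rw [Function.iterate_succ_apply']; exact irrational_gaussMap ih

lemma gaussMap_iterate_mem_Ioo {y : ℝ} (hy : Irrational y) (hy01 : y ∈ Set.Ioo 0 1) (k : ℕ) :
    gaussMap^[k] y ∈ Set.Ioo 0 1 := by
  cases k with
  | zero => exact hy01
  | succ k =>
    rw [Function.iterate_succ_apply']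
    exact gaussMap_mem_Ioo (irrational_gaussMap_iterate hy k)

lemma isRemainder_gaussMap_iterate {y : ℝ} (hy : Irrational y) (hy01 : y ∈ Set.Ioo 0 1) (k : ℕ) :
    IsRemainder y (gaussMap^[k] y) := by
  induction k with
  | zero => exact isRemainder_self y
  | succ k ih =>
    rw [Function.iterate_succ_apply']
    exact isRemainder_gaussMap ih (gaussMap_iterate_mem_Ioo hy hy01 k)

lemma mem_Fset_of_one_le_mul_abs_sub {n : ℕ} {y : ℝ} (hy : Irrational y)
    (hy01 : y ∈ Set.Ioo 0 1) (h : ∀ q p : ℤ, 0 < q → 1 ≤ n * q * |q * y - p|) : y ∈ Fset n := by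
  refine ⟨hy, hy01, fun k => ?_⟩
  have hx := (gaussMap_iterate_mem_Ioo hy hy01 k).1
  obtain ⟨q, p, hq, hqp⟩ := (isRemainder_gaussMap_iterate hy hy01 k).exists_mul_abs_sub_le hx
  have hnx : 1 / gaussMap^[k] y ≤ n := by
    rw [div_le_iff₀ hx]
    calc (1 : ℝ) ≤ n * (q * |q * y - p|) := by rw [← mul_assoc]; exact h q p hq
      _ ≤ n * gaussMap^[k] y := by gcongr
  simpa using Int.floor_le_floor hnx

lemma one_third_lt_mul_abs_mul_goldenConj_sub (q p : ℤ) (hq : 0 < q) :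
    1 / 3 < q * |q * ψ - p| := by
  have hq' : (1 : ℝ) ≤ q := by exact_mod_cast hq
  have hconj : 1 ≤ |q * φ - p| * |q * ψ - p| := by
    have hφ : q * φ - p ≠ 0 := sub_ne_zero.2 ((goldenRatio_irrational.intCast_mul hq.ne').ne_int p)
    have hψ : q * ψ - p ≠ 0 := sub_ne_zero.2 ((goldenConj_irrational.intCast_mul hq.ne').ne_int p)
    have e : (q * φ - p) * (q * ψ - p) = ((p ^ 2 - p * q - q ^ 2 : ℤ) : ℝ) := by
      push_cast
      linear_combination q ^ 2 * goldenRatio_mul_goldenConj - p * q * goldenRatio_add_goldenConj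
    have hN : p ^ 2 - p * q - q ^ 2 ≠ 0 := by
      rintro hN
      rw [hN, Int.cast_zero] at e
      exact mul_ne_zero hφ hψ e
    rw [← abs_mul, e, ← Int.cast_abs]
    exact_mod_cast Int.one_le_abs hN
  have hφψ : |q * φ - p| ≤ |q * ψ - p| + q * √5 := by
    have e : q * φ - p = (q * ψ - p) + q * √5 := by rw [← goldenRatio_sub_goldenConj]; ring
    rw [e]
    exact (abs_add_le _ _).trans_eq (by rw [abs_of_nonneg (by positivity : (0 : ℝ) ≤ q * √5)])
  have hsqrt5 : √5 < 9 / 4 := by rw [Real.sqrt_lt' (by norm_num)]; norm_num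
  by_contra! hle
  -- otherwise `q ≤ q |qψ - p| |qφ - p| ≤ (1 / 3) (1 / 3 + 9 q / 4) < q`
  nlinarith [abs_nonneg (q * ψ - p), abs_nonneg (q * φ - p)]

lemma sub_goldenConj_div_mem_Fset {n v i : ℕ} (hi : i < v) (hv : 3 * v ≤ n) :
    (i - ψ) / v ∈ Fset n := by
  have hv0 : (0 : ℝ) < v := by exact_mod_cast (Nat.zero_lt_of_lt hi)
  have hiv : (i : ℝ) + 1 ≤ v := by exact_mod_cast hi
  have hvn : 3 * (v : ℝ) ≤ n := by exact_mod_cast hv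
  refine mem_Fset_of_one_le_mul_abs_sub ((goldenConj_irrational.natCast_sub i).div_natCast
    (by omega : v ≠ 0)) ⟨?_, ?_⟩ fun q p hq => ?_
  · exact div_pos (by linarith [goldenConj_neg, (i.cast_nonneg : (0 : ℝ) ≤ i)]) hv0
  · rw [div_lt_one hv0]; linarith [neg_one_lt_goldenConj]
  · have hq' : (0 : ℝ) ≤ q := by exact_mod_cast hq.le
    have e : q * ((i - ψ) / v) - p = -(q * ψ - ((q * i - p * v : ℤ) : ℝ)) / v := by
      push_cast; field_simp; ring
    have := one_third_lt_mul_abs_mul_goldenConj_sub q (q * i - p * v) hq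
    rw [e, abs_div, abs_neg, abs_of_pos hv0]
    calc (1 : ℝ) ≤ 3 * (q * |q * ψ - ((q * i - p * v : ℤ) : ℝ)|) := by linarith
      _ = 3 * v * q * (|q * ψ - ((q * i - p * v : ℤ) : ℝ)| / v) := by field_simp
      _ ≤ n * q * (|q * ψ - ((q * i - p * v : ℤ) : ℝ)| / v) := by gcongr

theorem stmt2 :
    ∃ n₀ : ℕ, ∃ K : ℝ, 0 < K ∧
      ∀ n : ℕ, n₀ ≤ n →
        ∃ a t : ℝ, 0 < t ∧
          ∀ i : ℕ, (i : ℝ) < (n : ℝ) / (K * Real.log n) →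
            a + i * t ∈ Fset n := by
  refine ⟨3, 6, by norm_num, fun n hn => ?_⟩
  have hlog : 1 < Real.log n := by
    rw [Real.lt_log_iff_exp_lt (by positivity)]
    exact exp_one_lt_three.trans_le (by exact_mod_cast hn)
  have hv : 0 < n / 3 := Nat.div_pos hn (by norm_num)
  refine ⟨-ψ / (n / 3 : ℕ), 1 / (n / 3 : ℕ), by positivity, fun i hi => ?_⟩
  have h6i : (6 * i : ℝ) < n := by
    rw [lt_div_iff₀ (by positivity)] at hi
    nlinarith [(i.cast_nonneg : (0 : ℝ) ≤ i)]
  have hi3 : i < n / 3 := by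
    have : 6 * i < n := by exact_mod_cast h6i
    omega
  convert sub_goldenConj_div_mem_Fset hi3 (Nat.mul_div_le n 3) using 1
  field_simp
  ring
end

section
/- There exist K > 0 and n₀ ∈ ℕ such that for every integer n ≥ n₀ and every arithmetic progression of length k ≥ 2 contained in F_n (i.e., a ∈ ℝ, t > 0 with a + i·t ∈ F_n for all integers 0 ≤ i < k), one has k ≤ K·n². -/
open Set

theorem Nat.exists_lt_and_not_succ {p : ℕ → Prop} {k : ℕ} (h0 : p 0) (hk : ¬ p k) :
    ∃ j < k, p j ∧ ¬ p (j + 1) := by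
  by_contra! h
  have hp : ∀ j ≤ k, p j := by
    intro j
    induction j with
    | zero => exact fun _ => h0
    | succ j ih => exact fun hj => h j (by omega) (ih (by omega))
  exact hk (hp k le_rfl)

theorem nsmul_le_sub_of_le_sub_succ {α : Type*} [AddCommGroup α] [PartialOrder α]
    [IsOrderedAddMonoid α] {y : ℕ → α} {g : α} {m : ℕ} (h : ∀ i < m, g ≤ y (i + 1) - y i) :
    m • g ≤ y m - y 0 :=
  calc m • g = ∑ _i ∈ Finset.range m, g := by simp
    _ ≤ ∑ i ∈ Finset.range m, (y (i + 1) - y i) :=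
      Finset.sum_le_sum fun i hi => h i (Finset.mem_range.1 hi)
    _ = y m - y 0 := Finset.sum_range_sub y m

section Fset

variable {n : ℕ} {x : ℝ}

theorem pos_of_mem_Fset (h : x ∈ Fset n) : 0 < x := h.2.1.1

theorem lt_one_of_mem_Fset (h : x ∈ Fset n) : x < 1 := h.2.1.2

theorem floor_one_div_le_of_mem_Fset (h : x ∈ Fset n) : ⌊1 / x⌋ ≤ n := by
  simpa using h.2.2 0

theorem one_le_floor_one_div_of_mem_Fset (h : x ∈ Fset n) : 1 ≤ ⌊1 / x⌋ :=
  Int.le_floor.2 <| by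
    simpa using (one_le_one_div (pos_of_mem_Fset h) (lt_one_of_mem_Fset h).le)

theorem one_le_of_mem_Fset (h : x ∈ Fset n) : 1 ≤ n := by
  exact_mod_cast (one_le_floor_one_div_of_mem_Fset h).trans (floor_one_div_le_of_mem_Fset h)

theorem one_div_lt_of_mem_Fset (h : x ∈ Fset n) : 1 / x < n + 1 := by
  have : (⌊1 / x⌋ : ℝ) ≤ n := by exact_mod_cast floor_one_div_le_of_mem_Fset h
  linarith [Int.lt_floor_add_one (1 / x)]

theorem gaussMap_mem_Fset (h : x ∈ Fset n) : gaussMap x ∈ Fset n := by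
  have hirr : Irrational (gaussMap x) :=
    (by simpa only [one_div] using h.1.inv : Irrational (1 / x)).sub_intCast _
  refine ⟨hirr, ⟨(Int.fract_nonneg _).lt_of_ne' hirr.ne_zero, Int.fract_lt_one _⟩, fun k => ?_⟩
  simpa only [Function.iterate_succ_apply] using h.2.2 (k + 1)

theorem floor_add_lt_one_div_of_mem_Fset (h : x ∈ Fset n) :
    (⌊1 / x⌋ : ℝ) + 1 / (n + 1) < 1 / x := by
  have hg := gaussMap_mem_Fset h
  have : 1 / ((n : ℝ) + 1) < gaussMap x :=
    (one_div_lt (by positivity) (pos_of_mem_Fset hg)).2 (one_div_lt_of_mem_Fset hg)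
  rw [gaussMap, Int.fract] at this
  linarith

theorem add_lt_one_div_of_mem_Fset (h : x ∈ Fset n) {m : ℤ} (hm : (m : ℝ) ≤ 1 / x) :
    m + 1 / ((n : ℝ) + 1) < 1 / x := by
  have : (m : ℝ) ≤ ⌊1 / x⌋ := by exact_mod_cast Int.le_floor.2 hm
  linarith [floor_add_lt_one_div_of_mem_Fset h]

theorem mul_sub_le_one_div_sub_one_div_of_mem_Fset {x' : ℝ} (hx : x ∈ Fset n) (hx' : x' < 1)
    (hxx' : x ≤ x') : (1 + 1 / ((n : ℝ) + 1)) * (x' - x) ≤ 1 / x - 1 / x' := by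
  have hx0 := pos_of_mem_Fset hx
  have hx'0 : 0 < x' := hx0.trans_le hxx'
  have hfac : 1 + 1 / ((n : ℝ) + 1) < 1 / x := by
    simpa using add_lt_one_div_of_mem_Fset hx (m := 1)
      (by simpa using one_le_one_div hx0 (lt_one_of_mem_Fset hx).le)
  have hsub : 0 ≤ x' - x := sub_nonneg.2 hxx'
  calc (1 + 1 / ((n : ℝ) + 1)) * (x' - x) ≤ 1 / x * (x' - x) := by gcongr
    _ ≤ 1 / x * (x' - x) * (1 / x') := by
        apply le_mul_of_one_le_right (by positivity)
        exact one_le_one_div hx'0 hx'.le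
    _ = 1 / x - 1 / x' := by field_simp

theorem one_lt_mul_sub_of_mem_Fset {x' : ℝ} {M : ℤ} (hx : x ∈ Fset n) (hx' : 0 < x')
    (hM : 1 ≤ M) (h : (M : ℝ) + 1 ≤ 1 / x) (h' : 1 / x' < M + 1) :
    1 < 12 * n * M ^ 2 * (x' - x) := by
  have hx0 := pos_of_mem_Fset hx
  have hn : (1 : ℝ) ≤ n := by exact_mod_cast one_le_of_mem_Fset hx
  have hM' : (1 : ℝ) ≤ M := by exact_mod_cast hM
  have hgap := add_lt_one_div_of_mem_Fset hx (m := M + 1) (by push_cast; exact h)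
  push_cast at hgap
  set s := 1 / ((n : ℝ) + 1) with hs
  have hs0 : 0 < s := by positivity
  have hns : 1 ≤ 2 * n * s := by
    rw [hs, mul_one_div, le_div_iff₀ (by positivity)]
    linarith
  have hx_lt : x < 1 / (M + 1 + s) := (lt_one_div hx0 (by positivity)).2 hgap
  have hx'_gt : 1 / ((M : ℝ) + 1) < x' := (one_div_lt hx' (by positivity)).1 h'
  have hdiff : 1 / ((M : ℝ) + 1) - 1 / (M + 1 + s) = s / ((M + 1) * (M + 1 + s)) := by
    field_simp
    ring
  have hden : ((M : ℝ) + 1) * (M + 1 + s) ≤ 12 * n * M ^ 2 * s := by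
    have : s ≤ 1 := by rw [hs, div_le_one (by positivity)]; linarith
    nlinarith
  calc (1 : ℝ) ≤ 12 * n * M ^ 2 * (s / ((M + 1) * (M + 1 + s))) := by
        rw [mul_div_assoc', le_div_iff₀ (by positivity)]
        nlinarith
    _ < 12 * n * M ^ 2 * (x' - x) := by
        gcongr
        linarith

end Fset

theorem natCast_le_of_floor_one_div_ne {n k : ℕ} {y : ℕ → ℝ} {g : ℝ}
    (hmem : ∀ i < k, y i ∈ Fset n) (hlow : ∀ i, i + 1 < k → g ≤ y (i + 1) - y i)
    (hhigh : ∀ i, i + 1 < k → y (i + 1) - y i ≤ 4 * g) (hne : ⌊1 / y 0⌋ ≠ ⌊1 / y (k - 1)⌋) :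
    (k : ℝ) ≤ 49 * n ^ 2 := by
  have hk : 2 ≤ k := by
    by_contra hk
    exact hne (by rw [show k - 1 = 0 by omega])
  obtain ⟨l, rfl⟩ : ∃ l, k = l + 1 := ⟨k - 1, by omega⟩
  rw [Nat.add_sub_cancel] at hne
  have hfirst := hmem 0 (by omega)
  have hlast := hmem l (by omega)
  set M := ⌊1 / y l⌋ with hM
  have hM1 : 1 ≤ M := one_le_floor_one_div_of_mem_Fset hlast
  have hMn : M ≤ n := floor_one_div_le_of_mem_Fset hlast
  have hM0 : (0 : ℝ) < M := by exact_mod_cast hM1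
  have hspan : l * g ≤ y l - y 0 := by
    simpa using nsmul_le_sub_of_le_sub_succ fun i hi => hlow i (by omega)
  have hg : 0 ≤ g := by linarith [hlow 0 (by omega), hhigh 0 (by omega)]
  have hy0 : (M : ℝ) + 1 ≤ 1 / y 0 := by
    have hmono : M ≤ ⌊1 / y 0⌋ :=
      Int.floor_mono (one_div_le_one_div_of_le (pos_of_mem_Fset hfirst) (by nlinarith))
    have : M + 1 ≤ ⌊1 / y 0⌋ := by omega
    exact_mod_cast Int.le_floor.1 this
  obtain ⟨j, hj, hj0, hj1⟩ := Nat.exists_lt_and_not_succ (p := fun i => (M : ℝ) + 1 ≤ 1 / y i)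
    hy0 (not_le.2 (Int.lt_floor_add_one (1 / y l)))
  have hcross : 1 < 12 * n * M ^ 2 * (y (j + 1) - y j) :=
    one_lt_mul_sub_of_mem_Fset (hmem j (by omega)) (pos_of_mem_Fset (hmem (j + 1) (by omega)))
      hM1 hj0 (not_le.1 hj1)
  have hyl : y l * M ≤ 1 := by
    have := Int.floor_le (1 / y l)
    rw [← hM, le_div_iff₀ (pos_of_mem_Fset hlast)] at this
    linarith
  have hn : (1 : ℝ) ≤ n := by exact_mod_cast one_le_of_mem_Fset hlast
  have hlgM : l * g * M ≤ 1 := by nlinarith [pos_of_mem_Fset hfirst]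
  have hgM : 1 ≤ 48 * n * M ^ 2 * g := by
    have := mul_le_mul_of_nonneg_left (hhigh j (by omega))
      (by positivity : (0 : ℝ) ≤ 12 * n * M ^ 2)
    linarith
  have hl : (l : ℝ) ≤ 48 * n ^ 2 :=
    calc (l : ℝ) ≤ l * (48 * n * M ^ 2 * g) := le_mul_of_one_le_right (by positivity) hgM
      _ = 48 * n * M * (l * g * M) := by ring
      _ ≤ 48 * n * M := mul_le_of_le_one_right (by positivity) hlgM
      _ ≤ 48 * n ^ 2 := by
        have : (M : ℝ) ≤ n := by exact_mod_cast hMn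
        nlinarith
  push_cast
  nlinarith

/-- The shape of the increments of `i ↦ φ (a + i t)` for a unimodular Möbius map `φ` whose
inverse has denominator `C y + D`. It survives `y ↦ 1 / y - m` once the order is reversed. -/
def IsMobiusProgression (t C D : ℝ) (k : ℕ) (y : ℕ → ℝ) : Prop :=
  ∀ i, i + 1 < k → y (i + 1) - y i = t * ((C * y i + D) * (C * y (i + 1) + D))

namespace IsMobiusProgression

variable {t C D : ℝ} {k : ℕ} {y : ℕ → ℝ}

theorem rev_one_div_sub (hy : IsMobiusProgression t C D k y) (hpos : ∀ i < k, 0 < y i) (m : ℝ) :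
    IsMobiusProgression t D (C + D * m) k fun i => 1 / y (k - 1 - i) - m := by
  intro i hi
  obtain ⟨j, hj, hj'⟩ : ∃ j, k - 1 - i = j + 1 ∧ k - 1 - (i + 1) = j :=
    ⟨k - 2 - i, by omega, by omega⟩
  have hy0 := hpos j (by omega)
  have hy1 := hpos (j + 1) (by omega)
  simp only [hj, hj']
  have := hy j (by omega)
  field_simp
  linear_combination this

theorem sub_mem_Icc (hy : IsMobiusProgression t C D k y) (hmem : ∀ i < k, y i ∈ Icc (0 : ℝ) 1)
    (ht : 0 ≤ t) (hC : 0 ≤ C) (hCD : C ≤ D) {i : ℕ} (hi : i + 1 < k) :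
    y (i + 1) - y i ∈ Icc (t * D ^ 2) (4 * (t * D ^ 2)) := by
  obtain ⟨h0, h1⟩ := hmem i (by omega)
  obtain ⟨h0', h1'⟩ := hmem (i + 1) hi
  have hD : 0 ≤ D := hC.trans hCD
  have hlo : D * D ≤ (C * y i + D) * (C * y (i + 1) + D) := by
    apply mul_le_mul <;> nlinarith
  have hhi : (C * y i + D) * (C * y (i + 1) + D) ≤ (2 * D) * (2 * D) := by
    apply mul_le_mul <;> nlinarith
  rw [hy i hi]
  constructor <;> nlinarith

theorem monotoneOn (hy : IsMobiusProgression t C D k y) (hmem : ∀ i < k, y i ∈ Icc (0 : ℝ) 1)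
    (ht : 0 ≤ t) (hC : 0 ≤ C) (hCD : C ≤ D) : MonotoneOn y (Iio k) :=
  monotoneOn_of_le_succ ordConnected_Iio fun i _ _ hi => by
    have := (hy.sub_mem_Icc hmem ht hC hCD (i := i) (by simpa using hi)).1
    rw [Order.succ_eq_add_one]
    nlinarith [mul_nonneg ht (sq_nonneg D)]

end IsMobiusProgression

theorem floor_one_div_eq_of_monotoneOn {y : ℕ → ℝ} {k i : ℕ} (hy : MonotoneOn y (Iio k))
    (hpos : ∀ i < k, 0 < y i) (h : ⌊1 / y 0⌋ = ⌊1 / y (k - 1)⌋) (hi : i < k) :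
    ⌊1 / y i⌋ = ⌊1 / y 0⌋ :=
  le_antisymm
    (Int.floor_mono (one_div_le_one_div_of_le (hpos 0 (by omega))
      (hy (mem_Iio.2 (by omega)) hi (Nat.zero_le i))))
    (h ▸ Int.floor_mono (one_div_le_one_div_of_le (hpos i hi)
      (hy hi (mem_Iio.2 (by omega)) (by omega))))

theorem IsMobiusProgression.natCast_le {n k : ℕ} {t C D : ℝ} {y : ℕ → ℝ} (r : ℕ) (hk : 2 ≤ k)
    (hmem : ∀ i < k, y i ∈ Fset n) (hy : IsMobiusProgression t C D k y) (ht : 0 ≤ t)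
    (hC : 0 ≤ C) (hCD : C ≤ D)
    (hr : ∀ i, i + 1 < k → 1 ≤ (1 + 1 / ((n : ℝ) + 1)) ^ r * (y (i + 1) - y i)) :
    (k : ℝ) ≤ 49 * n ^ 2 := by
  induction r generalizing C D y with
  | zero =>
    have h := hr 0 (by omega)
    rw [pow_zero, one_mul] at h
    linarith [pos_of_mem_Fset (hmem 0 (by omega)), lt_one_of_mem_Fset (hmem 1 (by omega))]
  | succ r ih =>
    have hpos : ∀ i < k, 0 < y i := fun i hi => pos_of_mem_Fset (hmem i hi)
    have hIcc : ∀ i < k, y i ∈ Icc (0 : ℝ) 1 := fun i hi => Ioo_subset_Icc_self (hmem i hi).2.1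
    have hgap : ∀ i, i + 1 < k → y (i + 1) - y i ∈ Icc (t * D ^ 2) (4 * (t * D ^ 2)) :=
      fun i hi => hy.sub_mem_Icc hIcc ht hC hCD hi
    by_cases hfloor : ⌊1 / y 0⌋ = ⌊1 / y (k - 1)⌋
    · have hmono := hy.monotoneOn hIcc ht hC hCD
      set m := ⌊1 / y 0⌋
      have hdigit : ∀ i < k, ⌊1 / y i⌋ = m := fun i hi =>
        floor_one_div_eq_of_monotoneOn hmono hpos hfloor hi
      have hm : (1 : ℝ) ≤ m := by
        exact_mod_cast one_le_floor_one_div_of_mem_Fset (hmem 0 (by omega))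
      refine ih (C := D) (D := C + D * m) (y := fun i => 1 / y (k - 1 - i) - m) ?_
        (hy.rev_one_div_sub hpos m) (hC.trans hCD) (by nlinarith) ?_
      · intro i hi
        have := gaussMap_mem_Fset (hmem (k - 1 - i) (by omega))
        rwa [gaussMap, Int.fract, hdigit _ (by omega)] at this
      · intro i hi
        obtain ⟨j, hj, hj'⟩ : ∃ j, k - 1 - i = j + 1 ∧ k - 1 - (i + 1) = j :=
          ⟨k - 2 - i, by omega, by omega⟩
        simp only [hj, hj']
        have hgrow := mul_sub_le_one_div_sub_one_div_of_mem_Fset (hmem j (by omega))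
          (lt_one_of_mem_Fset (hmem (j + 1) (by omega)))
          (hmono (mem_Iio.2 (by omega)) (mem_Iio.2 (by omega)) (by omega))
        set q := 1 + 1 / ((n : ℝ) + 1)
        calc (1 : ℝ) ≤ q ^ (r + 1) * (y (j + 1) - y j) := hr j (by omega)
          _ = q ^ r * (q * (y (j + 1) - y j)) := by ring
          _ ≤ q ^ r * (1 / y j - m - (1 / y (j + 1) - m)) := by
            gcongr
            linarith
    · exact natCast_le_of_floor_one_div_ne hmem (fun i hi => (hgap i hi).1)
        (fun i hi => (hgap i hi).2) hfloor

theorem stmt3 :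
    ∃ K : ℝ, 0 < K ∧ ∃ n₀ : ℕ,
      ∀ n : ℕ, n₀ ≤ n →
        ∀ (a t : ℝ) (k : ℕ), 0 < t → 2 ≤ k →
          (∀ i : ℕ, i < k → a + i * t ∈ Fset n) →
          (k : ℝ) ≤ K * n ^ 2 := by
  refine ⟨49, by norm_num, 0, fun n _ a t k ht hk hAP => ?_⟩
  obtain ⟨r, hr⟩ := pow_unbounded_of_one_lt (1 / t) (lt_add_of_pos_right 1 (by positivity) :
    (1 : ℝ) < 1 + 1 / ((n : ℝ) + 1))
  have hAP' : IsMobiusProgression t 0 1 k fun i => a + i * t := fun i _ => by push_cast; ring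
  refine hAP'.natCast_le r hk hAP ht.le le_rfl zero_le_one fun i _ => ?_
  push_cast
  rw [add_sub_add_left_eq_sub, ← sub_mul, add_sub_cancel_left, one_mul]
  exact ((div_lt_iff₀ ht).1 hr).le
end

section
/- For every ε with 0 < ε ≤ 1/49 and every a ∈ M_ε, there exists x ∈ M_ε ∩ [0,1] with x ≠ a such that (a + x)/2 ∈ M_ε; in particular, every point of the middle-ε Cantor set M_ε is contained in a three-term arithmetic progression lying in M_ε. -/
/-!
Write `l = (1 - ε) / 2` and `a = (1 - l) ∑ bₙ lⁿ`. If `x = (1 - l) ∑ dₙ lⁿ` and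
`(a + x) / 2 = (1 - l) ∑ cₙ lⁿ` with bits `dₙ, cₙ`, then `∑ eₙ lⁿ = 0` for the integers
`eₙ = bₙ + dₙ - 2cₙ`; conversely any `eₙ` with `bₙ - 2 ≤ eₙ ≤ bₙ + 1` is of this form. So it
suffices to write `0 = ∑ eₙ lⁿ` with `e₀ = ∓1`, `e₁ = ±2` (the sign allowed by `b₁`) and
`eₙ ∈ {-1, 0, 1}` afterwards: the remainder `±(1 - 2l)` is so small for `ε ≤ 1/49` that the
greedy signed-digit expansion in base `l ≥ 1/3` represents it. As `e₀` is odd, `d₀ ≠ b₀`, and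
for `l < 1/2` the first digit already separates `x` from `a`.
-/

open Finset Filter Topology

section DigitSums

variable {l : ℝ}

lemma summable_ite_pow (hl0 : 0 ≤ l) (hl1 : l < 1) (b : ℕ → Bool) :
    Summable fun n => if b n then l ^ n else 0 :=
  (summable_geometric_of_lt_one hl0 hl1).of_nonneg_of_le
    (fun n => ite_nonneg (pow_nonneg hl0 n) le_rfl)
    (fun n => by split_ifs <;> simp [pow_nonneg hl0])

lemma tsum_ite_pow_nonneg (hl0 : 0 ≤ l) (b : ℕ → Bool) :
    0 ≤ ∑' n, if b n then l ^ n else 0 :=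
  tsum_nonneg fun n => ite_nonneg (pow_nonneg hl0 n) le_rfl

lemma tsum_ite_pow_le (hl0 : 0 ≤ l) (hl1 : l < 1) (b : ℕ → Bool) :
    ∑' n, (if b n then l ^ n else 0) ≤ (1 - l)⁻¹ := by
  rw [← tsum_geometric_of_lt_one hl0 hl1]
  exact (summable_ite_pow hl0 hl1 b).tsum_le_tsum
    (fun n => by split_ifs <;> simp [pow_nonneg hl0]) (summable_geometric_of_lt_one hl0 hl1)

lemma tsum_ite_pow_eq_add_tail (hl0 : 0 ≤ l) (hl1 : l < 1) (b : ℕ → Bool) :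
    ∑' n, (if b n then l ^ n else 0)
      = (if b 0 then 1 else 0) + l * ∑' n, if b (n + 1) then l ^ n else 0 := by
  rw [(summable_ite_pow hl0 hl1 b).tsum_eq_zero_add, ← tsum_mul_left]
  simp only [pow_zero, pow_succ', mul_ite, mul_zero]

lemma tsum_ite_pow_ne_of_head_ne (hl0 : 0 ≤ l) (hl : l < 1 / 2) {u v : ℕ → Bool}
    (h : u 0 ≠ v 0) :
    ∑' n, (if u n then l ^ n else 0) ≠ ∑' n, if v n then l ^ n else 0 := by
  have hl1 : l < 1 := by linarith
  have h_tail_lt (w : ℕ → Bool) : l * ∑' n, (if w (n + 1) then l ^ n else 0) < 1 :=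
    calc l * ∑' n, (if w (n + 1) then l ^ n else 0) ≤ l * (1 - l)⁻¹ :=
          mul_le_mul_of_nonneg_left (tsum_ite_pow_le hl0 hl1 _) hl0
      _ < 1 := by rw [← div_eq_mul_inv, div_lt_one (by linarith)]; linarith
  have h_tail_nonneg (w : ℕ → Bool) : 0 ≤ l * ∑' n, (if w (n + 1) then l ^ n else 0) :=
    mul_nonneg hl0 (tsum_ite_pow_nonneg hl0 _)
  rw [tsum_ite_pow_eq_add_tail hl0 hl1 u, tsum_ite_pow_eq_add_tail hl0 hl1 v]
  intro heq
  cases hu : u 0 <;> cases hv : v 0 <;>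
    simp only [hu, hv, ne_eq, not_true_eq_false, Bool.false_eq_true, ↓reduceIte] at h heq
  · linarith [h_tail_lt u, h_tail_nonneg v]
  · linarith [h_tail_lt v, h_tail_nonneg u]

end DigitSums

lemma middleCantor_subset_Icc_s4 {ε : ℝ} (hε₁ : -1 < ε) (hε₂ : ε ≤ 1) :
    middleCantor ε ⊆ Set.Icc 0 1 := by
  rintro _ ⟨b, rfl⟩
  have hl0 : 0 ≤ (1 - ε) / 2 := by linarith
  have hl1 : (1 - ε) / 2 < 1 := by linarith
  have h1l : 0 < 1 - (1 - ε) / 2 := by linarith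
  refine ⟨mul_nonneg h1l.le (tsum_ite_pow_nonneg hl0 b), ?_⟩
  calc _ ≤ (1 - (1 - ε) / 2) * (1 - (1 - ε) / 2)⁻¹ :=
        mul_le_mul_of_nonneg_left (tsum_ite_pow_le hl0 hl1 b) h1l.le
    _ = 1 := mul_inv_cancel₀ h1l.ne'

section SignedDigits

variable {l : ℝ}

lemma exists_signed_digit_step (hl : 1 / 3 ≤ l) (hl1 : l < 1) (t : ℝ) :
    ∃ k : ℤ, |k| ≤ 1 ∧ (|t| * (1 - l) ≤ 1 → |(t - k) / l| * (1 - l) ≤ 1) := by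
  have hl0 : 0 < l := by linarith
  have h1l : 0 < 1 - l := by linarith
  have key (k : ℤ) (hk : -l ≤ (t - k) * (1 - l) ∧ (t - k) * (1 - l) ≤ l) :
      |(t - k) / l| * (1 - l) ≤ 1 := by
    rwa [abs_div, abs_of_pos hl0, div_mul_eq_mul_div, div_le_one hl0, ← abs_of_pos h1l,
      ← abs_mul, abs_le]
  have ht_iff : |t| * (1 - l) ≤ 1 ↔ -1 ≤ t * (1 - l) ∧ t * (1 - l) ≤ 1 := by
    rw [← abs_le, abs_mul, abs_of_pos h1l]
  by_cases hpos : l < t * (1 - l)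
  · refine ⟨1, by norm_num, fun ht => key 1 ?_⟩
    have := ht_iff.mp ht
    push_cast
    constructor <;> nlinarith
  by_cases hneg : t * (1 - l) < -l
  · refine ⟨-1, by norm_num, fun ht => key (-1) ?_⟩
    have := ht_iff.mp ht
    push_cast
    constructor <;> nlinarith
  refine ⟨0, by norm_num, fun _ => key 0 ?_⟩
  rw [Int.cast_zero, sub_zero]
  constructor <;> linarith

lemma exists_signed_digits_hasSum (hl : 1 / 3 ≤ l) (hl1 : l < 1) {t : ℝ}
    (ht : |t| * (1 - l) ≤ 1) :
    ∃ e : ℕ → ℤ, (∀ n, |e n| ≤ 1) ∧ HasSum (fun n => (e n : ℝ) * l ^ n) t := by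
  have hl0 : 0 < l := by linarith
  have h1l : 0 < 1 - l := by linarith
  choose k hk_abs hk_step using exists_signed_digit_step hl hl1
  set r : ℕ → ℝ := fun n => (fun u => (u - k u) / l)^[n] t with hr
  have hr_succ (n : ℕ) : r (n + 1) = (r n - k (r n)) / l :=
    Function.iterate_succ_apply' _ n t
  have hr_bound (n : ℕ) : |r n| * (1 - l) ≤ 1 := by
    induction n with
    | zero => exact ht
    | succ n ih => rw [hr_succ]; exact hk_step _ ih
  have h_partial (N : ℕ) : ∑ n ∈ range N, (k (r n) : ℝ) * l ^ n = t - l ^ N * r N := by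
    induction N with
    | zero => simp [hr]
    | succ N ih =>
      rw [sum_range_succ, ih, hr_succ]
      field_simp
      ring
  have h_abs_k (n : ℕ) : ‖(k (r n) : ℝ) * l ^ n‖ ≤ l ^ n := by
    rw [norm_mul, Real.norm_eq_abs, Real.norm_eq_abs, abs_of_pos (pow_pos hl0 n)]
    exact mul_le_of_le_one_left (pow_pos hl0 n).le (by exact_mod_cast hk_abs _)
  refine ⟨fun n => k (r n), fun n => hk_abs _, ?_⟩
  rw [(Summable.of_norm_bounded (summable_geometric_of_lt_one hl0.le hl1) h_abs_k)
    |>.hasSum_iff_tendsto_nat]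
  have h_rem : Tendsto (fun N => l ^ N * r N) atTop (𝓝 0) := by
    refine squeeze_zero_norm (fun N => ?_)
      (by simpa using (tendsto_pow_atTop_nhds_zero_of_lt_one hl0.le hl1).div_const (1 - l))
    rw [norm_mul, Real.norm_eq_abs, Real.norm_eq_abs, abs_of_pos (pow_pos hl0 N),
      le_div_iff₀ h1l, mul_assoc]
    exact mul_le_of_le_one_right (pow_pos hl0 N).le (hr_bound N)
  simpa only [h_partial, sub_zero] using tendsto_const_nhds.sub h_rem

lemma exists_signed_digits_hasSum_zero (hl : 2 / 5 ≤ l) (hl1 : l ≤ 1 / 2) {s : ℤ}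
    (hs : |s| ≤ 1) :
    ∃ e : ℕ → ℤ, e 0 = -s ∧ e 1 = 2 * s ∧ (∀ n, |e (n + 2)| ≤ 1) ∧
      HasSum (fun n => (e n : ℝ) * l ^ n) 0 := by
  have hl0 : 0 < l := by linarith
  have hs' : |(s : ℝ)| ≤ 1 := by exact_mod_cast hs
  have ht : |s * (1 - 2 * l) / l ^ 2| * (1 - l) ≤ 1 := by
    rw [abs_div, abs_mul, abs_of_nonneg (by linarith : 0 ≤ 1 - 2 * l),
      abs_of_pos (by positivity : 0 < l ^ 2), div_mul_eq_mul_div, div_le_one (by positivity)]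
    nlinarith [mul_le_mul_of_nonneg_right hs'
      (by nlinarith : 0 ≤ (1 - 2 * l) * (1 - l))]
  obtain ⟨f, hf_abs, hf_sum⟩ := exists_signed_digits_hasSum (by linarith) (by linarith) ht
  have h_tail : HasSum (fun n => (f n : ℝ) * l ^ (n + 2)) (s * (1 - 2 * l)) := by
    have h := hf_sum.mul_left (l ^ 2)
    rw [mul_div_cancel₀ _ (pow_ne_zero 2 hl0.ne')] at h
    refine h.congr_fun fun n => ?_
    ring
  let e : ℕ → ℤ := fun | 0 => -s | 1 => 2 * s | n + 2 => f n
  have h_head : (0 : ℝ) - ∑ n ∈ range 2, (e n : ℝ) * l ^ n = s * (1 - 2 * l) := by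
    simp [e, sum_range_succ]
    ring
  refine ⟨e, rfl, rfl, hf_abs, (hasSum_nat_add_iff' 2).mp ?_⟩
  rw [h_head]
  exact h_tail

end SignedDigits

lemma exists_bools_ite_add_ite_sub_two_mul_ite (b : Bool) {e : ℤ}
    (he : |e| ≤ 1 ∨ e = if b then 2 else -2) :
    ∃ d c : Bool, ∀ x : ℝ,
      (if b then x else 0) + (if d then x else 0) - 2 * (if c then x else 0) = e * x := by
  rcases he with he | rfl
  · obtain ⟨he₁, he₂⟩ := abs_le.mp he
    interval_cases e
    · exact ⟨!b, true, fun x => by cases b <;> simp <;> ring⟩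
    · exact ⟨b, b, fun x => by cases b <;> simp [two_mul]⟩
    · exact ⟨!b, false, fun x => by cases b <;> simp⟩
  · cases b
    · exact ⟨false, true, fun x => by simp⟩
    · exact ⟨true, false, fun x => by simp; ring⟩

lemma ne_of_ite_add_ite_sub_two_mul_ite_eq_odd {b d c : Bool} {e : ℤ} (he : Odd e)
    (h : ((if b then 1 else 0) + (if d then 1 else 0) - 2 * (if c then 1 else 0) : ℝ) = e) :
    d ≠ b := by
  rintro rfl
  have h' : ((if d then 1 else 0) + (if d then 1 else 0) - 2 * (if c then 1 else 0) : ℤ) = e := by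
    exact_mod_cast h
  obtain ⟨k, rfl⟩ := he
  cases d <;> cases c <;> simp at h' <;> omega

lemma tsum_ite_pow_add_sub_two_mul_eq_zero {l : ℝ} (hl0 : 0 ≤ l) (hl1 : l < 1)
    {b d c : ℕ → Bool} {e : ℕ → ℤ} (he : HasSum (fun n => (e n : ℝ) * l ^ n) 0)
    (hdc : ∀ n x, ((if b n then x else 0) + (if d n then x else 0)
      - 2 * if c n then x else 0 : ℝ) = e n * x) :
    ∑' n, (if b n then l ^ n else 0) + ∑' n, (if d n then l ^ n else 0)
      - 2 * ∑' n, (if c n then l ^ n else 0) = 0 :=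
  (((summable_ite_pow hl0 hl1 b).hasSum.add (summable_ite_pow hl0 hl1 d).hasSum).sub
    ((summable_ite_pow hl0 hl1 c).hasSum.mul_left 2)).unique (by simpa only [hdc] using he)

theorem stmt4 (ε : ℝ) (hε0 : 0 < ε) (hε : ε ≤ 1 / 49)
    (a : ℝ) (ha : a ∈ middleCantor ε) :
    ∃ x ∈ middleCantor ε ∩ Set.Icc (0 : ℝ) 1, x ≠ a ∧
      (a + x) / 2 ∈ middleCantor ε := by
  obtain ⟨b, rfl⟩ := ha
  set l := (1 - ε) / 2 with hl
  have hl0 : 0 ≤ l := by linarith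
  have hl1 : l < 1 / 2 := by linarith
  set s : ℤ := if b 1 then 1 else -1
  have hs : |s| = 1 := by simp only [s]; split_ifs <;> rfl
  obtain ⟨e, he0, he1, he_tail, he_sum⟩ :=
    exists_signed_digits_hasSum_zero (by linarith) hl1.le hs.le
  have he_adm : ∀ n, |e n| ≤ 1 ∨ e n = if b n then 2 else -2
    | 0 => .inl (by rw [he0, abs_neg, hs])
    | 1 => .inr (by rw [he1]; simp only [s]; split_ifs <;> rfl)
    | n + 2 => .inl (he_tail n)
  choose d c hdc using fun n => exists_bools_ite_add_ite_sub_two_mul_ite (b n) (he_adm n)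
  have he0_odd : Odd (e 0) := by
    rw [he0, odd_neg]
    simp only [s]
    split_ifs <;> decide
  have hd0 : d 0 ≠ b 0 :=
    ne_of_ite_add_ite_sub_two_mul_ite_eq_odd he0_odd (by simpa using hdc 0 1)
  have h_digits := tsum_ite_pow_add_sub_two_mul_eq_zero hl0 (by linarith) he_sum hdc
  have hx : (1 - l) * ∑' n, (if d n then l ^ n else 0) ∈ middleCantor ε := ⟨d, rfl⟩
  refine ⟨_, ⟨hx, middleCantor_subset_Icc_s4 (by linarith) (by linarith) hx⟩, ?_, c, ?_⟩
  · exact fun h => tsum_ite_pow_ne_of_head_ne hl0 hl1 hd0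
      (mul_left_cancel₀ (by linarith : 1 - l ≠ 0) h)
  · linear_combination (1 - l) / 2 * h_digits
end

section
/- The set F_49 contains an arithmetic progression of length 3; that is, there exist a ∈ ℝ and t > 0 such that a, a + t, and a + 2t all belong to F_49. -/
open Set

theorem Fset_mono {m n : ℕ} (h : m ≤ n) : Fset m ⊆ Fset n :=
  fun _ ⟨hirr, hx, hle⟩ => ⟨hirr, hx, fun k => (hle k).trans (by exact_mod_cast h)⟩

section GaussMap

variable {x y : ℝ} {m : ℤ}

theorem gaussMap_eq_of_one_div_eq (hy : y ∈ Ico 0 1) (h : 1 / x = y + m) : gaussMap x = y := by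
  rw [gaussMap, h, Int.fract_add_intCast, Int.fract_eq_self.2 hy]

theorem floor_one_div_eq_of_one_div_eq (hy : y ∈ Ico 0 1) (h : 1 / x = y + m) :
    ⌊1 / x⌋ = m := by
  rw [h, Int.floor_add_intCast, Int.floor_eq_zero_iff.2 hy, zero_add]

theorem mem_Fset_of_two_cycle {N : ℕ} {n : ℤ} (hirr : Irrational x) (hx : x ∈ Ioo 0 1)
    (hy : y ∈ Ico 0 1) (hm : m ≤ N) (hn : n ≤ N) (hxy : 1 / x = y + m) (hyx : 1 / y = x + n) :
    x ∈ Fset N := by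
  have hx' : x ∈ Ico 0 1 := Ioo_subset_Ico_self hx
  have hperiodic : Function.IsPeriodicPt gaussMap 2 x := by
    simp only [Function.IsPeriodicPt, Function.IsFixedPt, Function.iterate_succ_apply,
      Function.iterate_zero_apply, gaussMap_eq_of_one_div_eq hy hxy,
      gaussMap_eq_of_one_div_eq hx' hyx]
  refine ⟨hirr, hx, fun k => ?_⟩
  rw [← hperiodic.iterate_mod_apply]
  rcases Nat.mod_two_eq_zero_or_one k with hk | hk <;> rw [hk]
  · rwa [Function.iterate_zero_apply, floor_one_div_eq_of_one_div_eq hy hxy]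
  · rwa [Function.iterate_one, gaussMap_eq_of_one_div_eq hy hxy,
      floor_one_div_eq_of_one_div_eq hx' hyx]

end GaussMap

section Progression

variable {u : ℝ} {j k : ℕ}

theorem one_div_mul_div_twelve (hu : u * (u + 12) = 3) (hjk : j * k = 48) :
    1 / (j * u / 12) = k * u / 12 + k := by
  have hj : (j : ℝ) ≠ 0 := by rintro h; simp_all
  have hu0 : u ≠ 0 := by rintro rfl; norm_num at hu
  have hjk' : (j : ℝ) * k = 48 := by exact_mod_cast hjk
  rw [div_eq_iff (by positivity)]
  linear_combination (-(j * k : ℝ) / 144) * hu - hjk' / 48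

theorem mul_div_twelve_mem_Fset (hu0 : 0 < u) (hu : u * (u + 12) = 3) (hirr : Irrational u)
    (hjk : j * k = 48) : j * u / 12 ∈ Fset 48 := by
  have hu4 : u < 1 / 4 := by nlinarith
  have hIoo : ∀ i : ℕ, i ∣ 48 → (i : ℝ) * u / 12 ∈ Ioo 0 1 := fun i hi => by
    have hi0 : (0 : ℝ) < i := by exact_mod_cast Nat.pos_of_dvd_of_pos hi (by norm_num)
    have hi48 : (i : ℝ) ≤ 48 := by exact_mod_cast Nat.le_of_dvd (by norm_num) hi
    constructor <;> nlinarith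
  have hj : j ∣ 48 := ⟨k, hjk.symm⟩
  have hk : k ∣ 48 := ⟨j, by rw [← hjk, mul_comm]⟩
  have hirr' : Irrational (j * u / 12) := by
    simpa using (hirr.natCast_mul (Nat.pos_of_dvd_of_pos hj (by norm_num)).ne').div_natCast
      (m := 12) (by norm_num)
  refine mem_Fset_of_two_cycle (y := k * u / 12) (m := k) (n := j) hirr' (hIoo j hj)
    (Ioo_subset_Ico_self (hIoo k hk)) (by exact_mod_cast Nat.le_of_dvd (by norm_num) hk)
    (by exact_mod_cast Nat.le_of_dvd (by norm_num) hj) ?_ ?_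
  · simpa using one_div_mul_div_twelve hu hjk
  · simpa using one_div_mul_div_twelve hu (by rwa [mul_comm])

end Progression

theorem stmt5 :
    ∃ a t : ℝ, 0 < t ∧ a ∈ Fset 49 ∧ a + t ∈ Fset 49 ∧ a + 2 * t ∈ Fset 49 := by
  obtain ⟨u, hu0, hu, hirr⟩ : ∃ u : ℝ, 0 < u ∧ u * (u + 12) = 3 ∧ Irrational u := by
    have h39 : √39 ^ 2 = 39 := Real.sq_sqrt (by norm_num)
    have hirr39 : Irrational √((39 : ℕ) : ℝ) := irrational_sqrt_natCast_iff.2 (by decide +kernel)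
    refine ⟨√39 - 6, ?_, by linear_combination h39, by simpa using hirr39.sub_natCast 6⟩
    nlinarith [Real.sqrt_nonneg 39]
  have hmem : ∀ j k : ℕ, j * k = 48 → (j : ℝ) * u / 12 ∈ Fset 49 := fun j k hjk =>
    Fset_mono (by norm_num) (mul_div_twelve_mem_Fset hu0 hu hirr hjk)
  refine ⟨u / 12, u / 12, by positivity, ?_, ?_, ?_⟩
  · simpa using hmem 1 48 rfl
  · convert hmem 2 24 rfl using 1; push_cast; ring
  · convert hmem 3 16 rfl using 1; push_cast; ring
end

section
/- Every t in the closed interval [1/6, 11/6] can be written as t = x + y with x, y ∈ F_49; that is, F_49 + F_49 ⊇ [1/6, 11/6]. -/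
/-!
The closure of `Fset 49` is a Cantor set in `[cfMin, cfMax]` whose bridges are the intervals
`cfPrepend w '' [cfMin, 1 / (a + cfMin)]`. Removing the gap between the cylinder of the digit `a`
and those of the digits `> a` splits such a bridge into two bridges, each at least as long as the
gap and with no larger gaps; this is checked on the explicit Möbius maps `cfPrepend w`, whose
distortion is bounded.

Newhouse's gap lemma argument then applies. If `t ∈ B₁ + B₂` and each bridge is at least as long
as the gap of the other, splitting the bridge with the larger gap keeps a half `B'` with
`t ∈ B' + B₂`, and the invariant survives. For `t ∈ [1/6, 11/6]` one can start from
`B₁ = B₂ = [cfMin, cfMax]`. Gaps are comparable to their bridges, so the total length decays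
geometrically and the words grow without bound; by compactness `t = x + y` with `x` and `y` in
all bridges. Their Gauss orbits then stay in `[cfMin, cfMax]`, so they lie in `Fset 49`.
-/

open Set
open scoped Pointwise

namespace SumsetF49

lemma Icc_inter_nonempty_or {b₀ b₁ b₂ b₃ α β : ℝ} (h₀₁ : b₀ ≤ b₁) (h₂₃ : b₂ ≤ b₃)
    (hgap : b₂ - b₁ ≤ β - α) (h : (Icc b₀ b₃ ∩ Icc α β).Nonempty) :
    (Icc b₀ b₁ ∩ Icc α β).Nonempty ∨ (Icc b₂ b₃ ∩ Icc α β).Nonempty := by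
  obtain ⟨p, ⟨hp₀, hp₃⟩, hpα, hpβ⟩ := h
  by_cases hp₁ : p ≤ b₁
  · exact .inl ⟨p, ⟨hp₀, hp₁⟩, hpα, hpβ⟩
  by_cases hp₂ : b₂ ≤ p
  · exact .inr ⟨p, ⟨hp₂, hp₃⟩, hpα, hpβ⟩
  by_cases hα : α ≤ b₁
  · exact .inl ⟨b₁, ⟨h₀₁, le_rfl⟩, hα, by linarith⟩
  · exact .inr ⟨b₂, ⟨le_rfl, h₂₃⟩, by linarith, by linarith⟩

/-- An interval at least as long as a gap of `f '' [x₀, x₃]` cannot meet that image in the gap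
only. -/
lemma uIcc_inter_nonempty_or {f : ℝ → ℝ} {s : Set ℝ} (hf : MonotoneOn f s ∨ AntitoneOn f s)
    {x₀ x₁ x₂ x₃ α β : ℝ} (h₀ : x₀ ∈ s) (h₁ : x₁ ∈ s) (h₂ : x₂ ∈ s) (h₃ : x₃ ∈ s)
    (h₀₁ : x₀ ≤ x₁) (h₁₂ : x₁ ≤ x₂) (h₂₃ : x₂ ≤ x₃) (hgap : |f x₂ - f x₁| ≤ |β - α|)
    (h : (uIcc (f x₀) (f x₃) ∩ uIcc α β).Nonempty) :
    (uIcc (f x₀) (f x₁) ∩ uIcc α β).Nonempty ∨ (uIcc (f x₂) (f x₃) ∩ uIcc α β).Nonempty := by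
  rw [← max_sub_min_eq_abs α β] at hgap
  rcases hf with hf | hf
  · have m₀₁ := hf h₀ h₁ h₀₁
    have m₁₂ := hf h₁ h₂ h₁₂
    have m₂₃ := hf h₂ h₃ h₂₃
    rw [uIcc_of_le m₀₁, uIcc_of_le m₂₃]
    rw [uIcc_of_le (m₀₁.trans (m₁₂.trans m₂₃))] at h
    exact Icc_inter_nonempty_or m₀₁ m₂₃ (by rwa [abs_of_nonneg (sub_nonneg.2 m₁₂)] at hgap) h
  · have m₀₁ := hf h₀ h₁ h₀₁
    have m₁₂ := hf h₁ h₂ h₁₂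
    have m₂₃ := hf h₂ h₃ h₂₃
    rw [uIcc_of_ge m₀₁, uIcc_of_ge m₂₃]
    rw [uIcc_of_ge (m₂₃.trans (m₁₂.trans m₀₁))] at h
    exact (Icc_inter_nonempty_or m₂₃ m₀₁
      (by rwa [abs_of_nonpos (sub_nonpos.2 m₁₂), neg_sub] at hgap) h).symm

lemma mem_uIcc_of_monotoneOn_or_antitoneOn {f : ℝ → ℝ} {s : Set ℝ}
    (hf : MonotoneOn f s ∨ AntitoneOn f s) {x y z : ℝ} (hx : x ∈ s) (hy : y ∈ s) (hz : z ∈ s)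
    (hxy : x ≤ y) (hyz : y ≤ z) : f y ∈ uIcc (f x) (f z) := by
  rcases hf with hf | hf
  exacts [mem_uIcc.2 (.inl ⟨hf hx hy hxy, hf hy hz hyz⟩),
    mem_uIcc.2 (.inr ⟨hf hy hz hyz, hf hx hy hxy⟩)]

lemma exists_seq_of_forall_exists {α : Type*} {P : α → Prop} {R : α → α → Prop} {a : α}
    (ha : P a) (h : ∀ a, P a → ∃ b, P b ∧ R a b) :
    ∃ f : ℕ → α, ∀ n, P (f n) ∧ R (f n) (f (n + 1)) := by
  choose g hg using h
  let F : ℕ → {a // P a} := fun n ↦ Nat.rec ⟨a, ha⟩ (fun _ x ↦ ⟨g x.1 x.2, (hg x.1 x.2).1⟩) n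
  exact ⟨fun n ↦ (F n).1, fun n ↦ ⟨(F n).2, (hg _ (F n).2).2⟩⟩

lemma exists_forall_mem_add_eq {X : Type*} [TopologicalSpace X] [T2Space X] [Add X]
    [ContinuousAdd X] {A B : ℕ → Set X} (hA : ∀ n, IsCompact (A n)) (hB : ∀ n, IsCompact (B n))
    (hA' : ∀ n, A (n + 1) ⊆ A n) (hB' : ∀ n, B (n + 1) ⊆ B n) {t : X}
    (ht : ∀ n, t ∈ A n + B n) : ∃ x y, (∀ n, x ∈ A n) ∧ (∀ n, y ∈ B n) ∧ x + y = t := by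
  have hsum : IsClosed {p : X × X | p.1 + p.2 = t} :=
    isClosed_eq (continuous_fst.add continuous_snd) continuous_const
  obtain ⟨⟨x, y⟩, hxy⟩ := IsCompact.nonempty_iInter_of_sequence_nonempty_isCompact_isClosed
    (fun n ↦ A n ×ˢ B n ∩ {p | p.1 + p.2 = t})
    (fun n ↦ inter_subset_inter_left _ (prod_mono (hA' n) (hB' n)))
    (fun n ↦ by obtain ⟨x, hx, y, hy, h⟩ := ht n; exact ⟨(x, y), ⟨hx, hy⟩, h⟩)
    (((hA 0).prod (hB 0)).inter_right hsum)
    (fun n ↦ ((hA n).isClosed.prod (hB n).isClosed).inter hsum)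
  simp only [mem_iInter, mem_inter_iff, mem_prod, mem_ofPred_eq] at hxy
  exact ⟨x, y, fun n ↦ (hxy n).1.1, fun n ↦ (hxy n).1.2, (hxy 0).2⟩

/-- Prepends the partial quotients `w` to the continued fraction expansion of `x`. -/
noncomputable def cfPrepend : List ℕ → ℝ → ℝ
  | [], x => x
  | a :: w, x => 1 / (a + cfPrepend w x)

/-- `cfPrepend w x = (p' x + p) / (q' x + q)`. -/
structure Continuants where
  q : ℕ
  p : ℕ
  q' : ℕ
  p' : ℕ

def continuants : List ℕ → Continuants
  | [] => ⟨1, 0, 0, 1⟩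
  | a :: w => ⟨a * (continuants w).q + (continuants w).p, (continuants w).q,
      a * (continuants w).q' + (continuants w).p', (continuants w).q'⟩

noncomputable def num (w : List ℕ) (x : ℝ) : ℝ := (continuants w).p' * x + (continuants w).p

noncomputable def den (w : List ℕ) (x : ℝ) : ℝ := (continuants w).q' * x + (continuants w).q

/-- The length of the image of `[x, y]` under `cfPrepend w`. -/
noncomputable def imgLen (w : List ℕ) (x y : ℝ) : ℝ := (y - x) / (den w x * den w y)

section Words

variable {w : List ℕ} {x y z : ℝ}

lemma cfPrepend_append (w : List ℕ) (d : ℕ) (x : ℝ) :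
    cfPrepend (w ++ [d]) x = cfPrepend w (1 / (d + x)) := by
  induction w with
  | nil => rfl
  | cons a w ih => simp only [List.cons_append, cfPrepend, ih]

lemma cfPrepend_nonneg (hw : ∀ d ∈ w, 1 ≤ d) (hx : 0 ≤ x) : 0 ≤ cfPrepend w x := by
  induction w with
  | nil => exact hx
  | cons a w ih =>
    have := ih fun d hd ↦ hw d (List.mem_cons_of_mem a hd)
    simp only [cfPrepend]
    positivity

lemma cfPrepend_mem_Ioo (hw : ∀ d ∈ w, 1 ≤ d) (hx : x ∈ Ioo 0 1) : cfPrepend w x ∈ Ioo 0 1 := by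
  induction w with
  | nil => exact hx
  | cons a w ih =>
    obtain ⟨h0, h1⟩ := ih fun d hd ↦ hw d (List.mem_cons_of_mem a hd)
    have ha : (1 : ℝ) ≤ a := by exact_mod_cast hw a List.mem_cons_self
    simp only [cfPrepend]
    exact ⟨by positivity, (div_lt_one (by positivity)).2 (by linarith)⟩

lemma continuants_le (hw : ∀ d ∈ w, 1 ≤ d) :
    1 ≤ (continuants w).q ∧ (continuants w).p ≤ (continuants w).q ∧
      (continuants w).q' ≤ (continuants w).q ∧
      (continuants w).q' + (continuants w).p' ≤ (continuants w).q + (continuants w).p := by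
  induction w with
  | nil => simp [continuants]
  | cons a w ih =>
    obtain ⟨h1, h2, h3, h4⟩ := ih fun d hd ↦ hw d (List.mem_cons_of_mem a hd)
    have ha := hw a List.mem_cons_self
    simp only [continuants]
    refine ⟨?_, ?_, ?_, ?_⟩ <;> nlinarith

lemma den_pos (hw : ∀ d ∈ w, 1 ≤ d) (hx : 0 ≤ x) : 0 < den w x := by
  have : (1 : ℝ) ≤ (continuants w).q := by exact_mod_cast (continuants_le hw).1
  unfold den
  positivity

lemma den_mono (w : List ℕ) : Monotone (den w) := fun x y hxy ↦ by
  unfold den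
  gcongr

lemma den_mul_one_add_le (hw : ∀ d ∈ w, 1 ≤ d) (hxy : x ≤ y) :
    den w y * (1 + x) ≤ den w x * (1 + y) := by
  have : ((continuants w).q' : ℝ) ≤ (continuants w).q := by
    exact_mod_cast (continuants_le hw).2.2.1
  unfold den
  nlinarith

lemma continuants_q_le_pow {N : ℕ} (hw : ∀ d ∈ w, 1 ≤ d ∧ d ≤ N) :
    (continuants w).q ≤ (N + 1) ^ w.length := by
  induction w with
  | nil => simp [continuants]
  | cons a w ih =>
    have hw' : ∀ d ∈ w, 1 ≤ d ∧ d ≤ N := fun d hd ↦ hw d (List.mem_cons_of_mem a hd)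
    have hpq := (continuants_le fun d hd ↦ (hw' d hd).1).2.1
    have ha := (hw a List.mem_cons_self).2
    simp only [continuants, List.length_cons, pow_succ]
    nlinarith [ih hw']

lemma den_le_pow {N : ℕ} (hw : ∀ d ∈ w, 1 ≤ d ∧ d ≤ N) (hx : x ≤ 1) :
    den w x ≤ 2 * ((N : ℝ) + 1) ^ w.length := by
  have hq : ((continuants w).q : ℝ) ≤ ((N : ℝ) + 1) ^ w.length := by
    exact_mod_cast continuants_q_le_pow hw
  have hq' : ((continuants w).q' : ℝ) ≤ (continuants w).q := by
    exact_mod_cast (continuants_le fun d hd ↦ (hw d hd).1).2.2.1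
  unfold den
  nlinarith [mul_nonneg (continuants w).q'.cast_nonneg (sub_nonneg.2 hx)]

lemma den_cons_eq (a : ℕ) (w : List ℕ) (x : ℝ) : den (a :: w) x = a * den w x + num w x := by
  simp only [den, num, continuants]
  push_cast
  ring

lemma cfPrepend_mul_den (hw : ∀ d ∈ w, 1 ≤ d) (hx : 0 ≤ x) :
    cfPrepend w x * den w x = num w x := by
  induction w with
  | nil => simp [cfPrepend, den, num, continuants]
  | cons a w ih =>
    have hw' : ∀ d ∈ w, 1 ≤ d := fun d hd ↦ hw d (List.mem_cons_of_mem a hd)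
    have ha : (1 : ℝ) ≤ a := by exact_mod_cast hw a List.mem_cons_self
    have hpos : 0 < (a : ℝ) + cfPrepend w x := by linarith [cfPrepend_nonneg hw' hx]
    rw [den_cons_eq, ← ih hw', ← add_mul, cfPrepend, one_div, inv_mul_cancel_left₀ hpos.ne']
    simp only [den, num, continuants]

lemma den_cons (hw : ∀ d ∈ a :: w, 1 ≤ d) (hx : 0 ≤ x) :
    den (a :: w) x = (a + cfPrepend w x) * den w x := by
  rw [den_cons_eq, add_mul, cfPrepend_mul_den (fun d hd ↦ hw d (List.mem_cons_of_mem a hd)) hx]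

lemma cfPrepend_sub (hw : ∀ d ∈ w, 1 ≤ d) (hx : 0 ≤ x) (hy : 0 ≤ y) :
    cfPrepend w y - cfPrepend w x = (-1) ^ w.length * imgLen w x y := by
  induction w with
  | nil => simp [cfPrepend, imgLen, den, continuants]
  | cons a w ih =>
    have hw' : ∀ d ∈ w, 1 ≤ d := fun d hd ↦ hw d (List.mem_cons_of_mem a hd)
    have ha : (1 : ℝ) ≤ a := by exact_mod_cast hw a List.mem_cons_self
    have hPx := cfPrepend_nonneg hw' hx
    have hPy := cfPrepend_nonneg hw' hy
    have hdx := den_pos hw' hx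
    have hdy := den_pos hw' hy
    have hax : 0 < (a : ℝ) + cfPrepend w x := by linarith
    have hay : 0 < (a : ℝ) + cfPrepend w y := by linarith
    unfold imgLen at ih ⊢
    rw [den_cons hw hx, den_cons hw hy, cfPrepend, cfPrepend, div_sub_div _ _ hay.ne' hax.ne',
      show 1 * ((a : ℝ) + cfPrepend w x) - (a + cfPrepend w y) * 1
        = -(cfPrepend w y - cfPrepend w x) by ring, ih hw', List.length_cons, pow_succ]
    field_simp

lemma imgLen_nil (x y : ℝ) : imgLen [] x y = y - x := by
  simp [imgLen, den, continuants]

lemma imgLen_nonneg (hw : ∀ d ∈ w, 1 ≤ d) (hx : 0 ≤ x) (hxy : x ≤ y) : 0 ≤ imgLen w x y :=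
  div_nonneg (by linarith) (mul_pos (den_pos hw hx) (den_pos hw (hx.trans hxy))).le

lemma abs_cfPrepend_sub (hw : ∀ d ∈ w, 1 ≤ d) (hx : 0 ≤ x) (hxy : x ≤ y) :
    |cfPrepend w y - cfPrepend w x| = imgLen w x y := by
  rw [cfPrepend_sub hw hx (hx.trans hxy), abs_mul, abs_pow, abs_neg, abs_one, one_pow, one_mul,
    abs_of_nonneg (imgLen_nonneg hw hx hxy)]

lemma imgLen_add (hw : ∀ d ∈ w, 1 ≤ d) (hx : 0 ≤ x) (hy : 0 ≤ y) (hz : 0 ≤ z) :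
    imgLen w x y + imgLen w y z = imgLen w x z := by
  have := den_pos hw hx
  have := den_pos hw hy
  have := den_pos hw hz
  unfold imgLen
  field_simp
  unfold den
  ring

lemma cfPrepend_monotoneOn_or_antitoneOn (hw : ∀ d ∈ w, 1 ≤ d) :
    MonotoneOn (cfPrepend w) (Ici 0) ∨ AntitoneOn (cfPrepend w) (Ici 0) := by
  rcases neg_one_pow_eq_or ℝ w.length with h | h
  · refine Or.inl fun x hx y _ hxy ↦ ?_
    have := cfPrepend_sub hw hx (hx.trans hxy)
    rw [h, one_mul] at this
    linarith [imgLen_nonneg hw hx hxy]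
  · refine Or.inr fun x hx y _ hxy ↦ ?_
    have := cfPrepend_sub hw hx (hx.trans hxy)
    rw [h, neg_one_mul] at this
    linarith [imgLen_nonneg hw hx hxy]

lemma imgLen_append (hw : ∀ d ∈ w, 1 ≤ d) {d : ℕ} (hd : 1 ≤ d) (hx : 0 ≤ x) (hxy : x ≤ y) :
    imgLen (w ++ [d]) x y = imgLen w (1 / (d + y)) (1 / (d + x)) := by
  have hw' : ∀ e ∈ w ++ [d], 1 ≤ e := by
    simpa [or_imp, forall_and] using And.intro hw hd
  have hdx : (0 : ℝ) < d + x := by positivity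
  have hdy : (0 : ℝ) < d + y := by linarith
  rw [← abs_cfPrepend_sub hw' hx hxy, ← abs_cfPrepend_sub hw (by positivity)
    (one_div_le_one_div_of_le hdx (by linarith)), cfPrepend_append, cfPrepend_append,
    abs_sub_comm]

lemma continuousOn_cfPrepend (hw : ∀ d ∈ w, 1 ≤ d) : ContinuousOn (cfPrepend w) (Ici 0) := by
  induction w with
  | nil => exact continuousOn_id
  | cons a w ih =>
    have hw' : ∀ d ∈ w, 1 ≤ d := fun d hd ↦ hw d (List.mem_cons_of_mem a hd)
    have ha : (1 : ℝ) ≤ a := by exact_mod_cast hw a List.mem_cons_self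
    refine continuousOn_const.div (continuousOn_const.add (ih hw')) fun x hx ↦ ?_
    linarith [cfPrepend_nonneg hw' hx]

lemma den_mul_one_add_le_of_le (hw : ∀ d ∈ w, 1 ≤ d) {a : ℝ} (hx : 0 ≤ x) (hxa : x ≤ a)
    (hya : y ≤ a) : den w y * (1 + x) ≤ den w x * (1 + a) :=
  calc den w y * (1 + x) ≤ den w a * (1 + x) := by gcongr; exact den_mono w hya
    _ ≤ den w x * (1 + a) := den_mul_one_add_le hw hxa

/-- Bounded distortion: `den w` grows at most by the factor `(1 + a) / (1 + x)` on `[x, a]`. -/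
lemma imgLen_le_mul_imgLen (hw : ∀ d ∈ w, 1 ≤ d) {x' y' a b c : ℝ} (hx : 0 ≤ x) (hxy : x ≤ y)
    (hx' : 0 ≤ x') (hy' : 0 ≤ y') (hxa : x ≤ a) (hx'a : x' ≤ a) (hyb : y ≤ b) (hy'b : y' ≤ b)
    (h : (y - x) * ((1 + a) * (1 + b)) ≤ c * (y' - x') * ((1 + x) * (1 + y))) :
    imgLen w x y ≤ c * imgLen w x' y' := by
  have hy : 0 ≤ y := hx.trans hxy
  have hdx := den_pos hw hx
  have hdy := den_pos hw hy
  have k₁ := den_mul_one_add_le_of_le hw hx hxa hx'a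
  have k₂ := den_mul_one_add_le_of_le hw hy hyb hy'b
  unfold imgLen
  rw [mul_div_assoc', div_le_div_iff₀ (mul_pos hdx hdy) (mul_pos (den_pos hw hx') (den_pos hw hy'))]
  refine le_of_mul_le_mul_right ?_ (by positivity : 0 < (1 + x) * (1 + y))
  calc (y - x) * (den w x' * den w y') * ((1 + x) * (1 + y))
      = (y - x) * ((den w x' * (1 + x)) * (den w y' * (1 + y))) := by ring
    _ ≤ (y - x) * ((den w x * (1 + a)) * (den w y * (1 + b))) := by
        have := den_pos hw hy'
        have : 0 ≤ den w x * (1 + a) := mul_nonneg hdx.le (by linarith)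
        gcongr
    _ = (y - x) * ((1 + a) * (1 + b)) * (den w x * den w y) := by ring
    _ ≤ c * (y' - x') * ((1 + x) * (1 + y)) * (den w x * den w y) := by gcongr
    _ = c * (y' - x') * (den w x * den w y) * ((1 + x) * (1 + y)) := by ring

lemma imgLen_le_imgLen (hw : ∀ d ∈ w, 1 ≤ d) {x' y' a b : ℝ} (hx : 0 ≤ x) (hxy : x ≤ y)
    (hx' : 0 ≤ x') (hy' : 0 ≤ y') (hxa : x ≤ a) (hx'a : x' ≤ a) (hyb : y ≤ b) (hy'b : y' ≤ b)
    (h : (y - x) * ((1 + a) * (1 + b)) ≤ (y' - x') * ((1 + x) * (1 + y))) :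
    imgLen w x y ≤ imgLen w x' y' := by
  simpa using imgLen_le_mul_imgLen (c := 1) hw hx hxy hx' hy' hxa hx'a hyb hy'b (by simpa using h)

end Words

lemma gaussMap_one_div_natCast_add (d : ℕ) {z : ℝ} (hz : z ∈ Ico 0 1) :
    gaussMap (1 / (d + z)) = z := by
  rw [gaussMap, one_div_one_div, add_comm, Int.fract_add_natCast, Int.fract_eq_self.2 hz]

lemma gaussMap_iterate_cfPrepend {w : List ℕ} (hw : ∀ d ∈ w, 1 ≤ d) {x : ℝ} (hx : x ∈ Ioo 0 1)
    {k : ℕ} (hk : k ≤ w.length) : gaussMap^[k] (cfPrepend w x) = cfPrepend (w.drop k) x := by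
  induction k generalizing w with
  | zero => rfl
  | succ k ih =>
    obtain _ | ⟨a, w⟩ := w
    · simp at hk
    have hw' : ∀ d ∈ w, 1 ≤ d := fun d hd ↦ hw d (List.mem_cons_of_mem a hd)
    have hP := cfPrepend_mem_Ioo hw' hx
    rw [Function.iterate_succ_apply, cfPrepend, gaussMap_one_div_natCast_add a
      ⟨hP.1.le, hP.2⟩, ih hw' (by simpa using hk), List.drop_succ_cons]

lemma gaussMap_natCast_div (p q : ℕ) : gaussMap (p / q) = (q % p : ℕ) / p := by
  rw [gaussMap, one_div_div, Int.fract_div_natCast_eq_div_natCast_mod]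

lemma exists_gaussMap_iterate_natCast_div_eq_zero (p q : ℕ) :
    ∃ k, gaussMap^[k] ((p : ℝ) / q) = 0 := by
  induction p using Nat.strong_induction_on generalizing q with
  | _ p ih =>
    rcases p.eq_zero_or_pos with rfl | hp
    · exact ⟨0, by simp⟩
    obtain ⟨k, hk⟩ := ih (q % p) (Nat.mod_lt q hp) p
    exact ⟨k + 1, by rw [Function.iterate_succ_apply, gaussMap_natCast_div, hk]⟩

lemma irrational_of_forall_gaussMap_iterate_pos {x : ℝ} (h : ∀ k, 0 < gaussMap^[k] x) :
    Irrational x := by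
  rintro ⟨r, rfl⟩
  have hr : 0 ≤ r.num := Rat.num_nonneg.2 (Rat.cast_pos.1 (h 0)).le
  obtain ⟨k, hk⟩ := exists_gaussMap_iterate_natCast_div_eq_zero r.num.natAbs r.den
  rw [Nat.cast_natAbs, Int.cast_abs, abs_of_nonneg (Int.cast_nonneg_iff.2 hr), ← Rat.cast_def] at hk
  exact (h k).ne' hk

/-- `cfMin = [0; 49, 1, 49, 1, …]` and `cfMax = [0; 1, 49, 1, 49, …]` are the least and the
largest point of the closure of `Fset 49`. -/
noncomputable def cfMin : ℝ := (√53 - 7) / 14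

noncomputable def cfMax : ℝ := 49 * cfMin

lemma cfMin_quadratic : 49 * cfMin ^ 2 + 49 * cfMin = 1 := by
  have : √53 ^ 2 = 53 := Real.sq_sqrt (by norm_num)
  unfold cfMin
  linear_combination this / 4

lemma cfMin_bounds : 0.0200078 < cfMin ∧ cfMin < 0.0200079 := by
  have h := cfMin_quadratic
  have : 0 < cfMin := by
    unfold cfMin
    have : (7 : ℝ) < √53 := Real.lt_sqrt_of_sq_lt (by norm_num)
    linarith
  constructor <;> nlinarith

lemma cfMax_bounds : 0.980382 < cfMax ∧ cfMax < 0.980388 := by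
  have := cfMin_bounds
  unfold cfMax
  constructor <;> linarith

lemma cfMin_pos : 0 < cfMin := by linarith [cfMin_bounds]

lemma cfMax_pos : 0 < cfMax := by linarith [cfMax_bounds]

lemma cfMin_mul_cfMax_add : cfMin * (49 + cfMax) = 1 := by
  unfold cfMax; linear_combination cfMin_quadratic

lemma cfMax_mul_one_add_cfMin : cfMax * (1 + cfMin) = 1 := by
  unfold cfMax; linear_combination cfMin_quadratic

lemma one_div_natCast_add_mem_Icc {d : ℕ} (hd : 1 ≤ d ∧ d ≤ 49) {z : ℝ}
    (hz : z ∈ Icc cfMin cfMax) : 1 / (d + z) ∈ Icc cfMin cfMax := by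
  obtain ⟨hd₁, hd₂⟩ : (1 : ℝ) ≤ d ∧ (d : ℝ) ≤ 49 := by exact_mod_cast hd
  have := cfMin_bounds
  have hdz : 0 < d + z := by linarith [hz.1]
  constructor
  · rw [le_div_iff₀ hdz]; nlinarith [cfMin_mul_cfMax_add, hz.2]
  · rw [div_le_iff₀ hdz]; nlinarith [cfMax_mul_one_add_cfMin, hz.1]

lemma cfPrepend_mem_Icc {w : List ℕ} (hw : ∀ d ∈ w, 1 ≤ d ∧ d ≤ 49) {x : ℝ}
    (hx : x ∈ Icc cfMin cfMax) : cfPrepend w x ∈ Icc cfMin cfMax := by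
  induction w with
  | nil => exact hx
  | cons a w ih =>
    exact one_div_natCast_add_mem_Icc (hw a List.mem_cons_self)
      (ih fun d hd ↦ hw d (List.mem_cons_of_mem a hd))

lemma mem_Fset_of_forall_gaussMap_iterate_mem {x : ℝ}
    (h : ∀ k, gaussMap^[k] x ∈ Icc cfMin cfMax) : x ∈ Fset 49 := by
  have hm := cfMin_bounds
  have hpos : ∀ k, 0 < gaussMap^[k] x := fun k ↦ by linarith [(h k).1]
  refine ⟨irrational_of_forall_gaussMap_iterate_pos hpos, ⟨hpos 0, ?_⟩, fun k ↦ ?_⟩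
  · exact (h 0).2.trans_lt (by linarith [cfMax_bounds])
  · have : 1 / gaussMap^[k] x < 50 := by
      rw [div_lt_iff₀ (hpos k)]; linarith [(h k).1]
    have := Int.floor_lt.2 (show 1 / gaussMap^[k] x < ((50 : ℤ) : ℝ) by exact_mod_cast this)
    omega

/-- The closure of `Fset 49` meets `[cfMin, bridgeEnd a]` in the cylinders `[0; d, …]` of the
digits `d ≥ a`: the one of `a` spans `[gapRight a, bridgeEnd a]`, the others
`[cfMin, gapLeft a]`. -/
noncomputable def gapLeft (A : ℝ) : ℝ := 1 / (A + 1 + cfMin)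

noncomputable def gapRight (A : ℝ) : ℝ := 1 / (A + cfMax)

noncomputable def bridgeEnd (A : ℝ) : ℝ := 1 / (A + cfMin)

section Numerics

variable {A : ℝ}

lemma cfMin_lt_gapLeft (hA : 0 ≤ A) (hA' : A ≤ 48) : cfMin < gapLeft A := by
  have := cfMin_bounds
  unfold gapLeft
  rw [lt_div_iff₀ (by linarith)]
  nlinarith

lemma gapLeft_lt_gapRight (hA : 0 ≤ A) : gapLeft A < gapRight A := by
  have := cfMin_bounds
  have := cfMax_bounds
  exact one_div_lt_one_div_of_lt (by linarith) (by linarith)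

lemma gapRight_lt_bridgeEnd (hA : 0 ≤ A) : gapRight A < bridgeEnd A := by
  have := cfMin_bounds
  have := cfMax_bounds
  exact one_div_lt_one_div_of_lt (by linarith) (by linarith)

lemma bridgeEnd_le_cfMax (hA : 1 ≤ A) : bridgeEnd A ≤ cfMax := by
  have := cfMin_bounds
  unfold bridgeEnd
  rw [div_le_iff₀ (by linarith)]
  nlinarith [cfMax_mul_one_add_cfMin]

lemma bridgeEnd_one : bridgeEnd 1 = cfMax := by
  have := cfMin_bounds
  rw [bridgeEnd, div_eq_iff (by linarith)]
  linear_combination -cfMax_mul_one_add_cfMin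

lemma one_div_add_cfMax : 1 / (49 + cfMax) = cfMin := by
  have := cfMax_bounds
  rw [div_eq_iff (by linarith)]
  linear_combination -cfMin_mul_cfMax_add

lemma gapLeft_pos (hA : 0 ≤ A) : 0 < gapLeft A := by
  have := cfMin_bounds
  unfold gapLeft
  exact one_div_pos.2 (by linarith)

lemma gapRight_pos (hA : 0 ≤ A) : 0 < gapRight A := by
  have := cfMax_bounds
  unfold gapRight
  exact one_div_pos.2 (by linarith)

lemma gapLeft_one_bounds : 0.49 < gapLeft 1 ∧ gapLeft 1 < 0.5 := by
  have := cfMin_bounds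
  rw [gapLeft, lt_div_iff₀ (by linarith), div_lt_iff₀ (by linarith)]
  constructor <;> linarith

lemma gapRight_one_bounds : 0.5 < gapRight 1 ∧ gapRight 1 < 0.51 := by
  have := cfMax_bounds
  rw [gapRight, lt_div_iff₀ (by linarith), div_lt_iff₀ (by linarith)]
  constructor <;> linarith

lemma gapRight_sub_gapLeft (hA : 0 ≤ A) :
    gapRight A - gapLeft A = (1 + cfMin - cfMax) / ((A + cfMax) * (A + 1 + cfMin)) := by
  have := cfMin_bounds
  have := cfMax_bounds
  have : 0 < A + cfMax := by linarith
  have : 0 < A + 1 + cfMin := by linarith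
  unfold gapLeft gapRight
  field_simp
  ring

lemma gapRight_sub_gapLeft_le (hA : 1 ≤ A) (hA' : A ≤ 48) :
    gapRight A - gapLeft A ≤ gapLeft A - cfMin := by
  have := cfMin_bounds
  have := cfMax_bounds
  have : 0 < A + cfMax := by linarith
  have : 0 < A + 1 + cfMin := by linarith
  unfold gapLeft gapRight
  field_simp
  rcases le_total A 40 with hA₄₀ | hA₄₀
  · have k₁ : 0.17 ≤ 1 - cfMin * (A + 1 + cfMin) := by nlinarith
    nlinarith [mul_le_mul k₁ (by linarith : 1.98 ≤ A + cfMax) (by norm_num) (by linarith)]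
  · have k₁ : 0.018 ≤ 1 - cfMin * (A + 1 + cfMin) := by nlinarith
    nlinarith [mul_le_mul k₁ (by linarith : 40.98 ≤ A + cfMax) (by norm_num) (by linarith)]

lemma gap_mul_le (hA : 1 ≤ A) :
    (gapRight A - gapLeft A) * (1 + bridgeEnd A) ≤
      (bridgeEnd A - gapRight A) * (1 + gapLeft A) := by
  have := cfMin_bounds
  have := cfMax_bounds
  have : 0 < A + cfMax := by linarith
  have : 0 < A + 1 + cfMin := by linarith
  have : 0 < A + cfMin := by linarith
  unfold gapLeft gapRight bridgeEnd
  field_simp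
  nlinarith

lemma gap_succ_mul_le (hA : 0 ≤ A) :
    (gapRight (A + 1) - gapLeft (A + 1)) * ((1 + gapLeft A) * (1 + gapRight A)) ≤
      (gapRight A - gapLeft A) * ((1 + gapLeft (A + 1)) * (1 + gapRight (A + 1))) := by
  have := cfMin_bounds
  have := cfMax_bounds
  have : 0 < A + cfMax := by linarith
  have : 0 < A + 1 + cfMin := by linarith
  have : 0 < A + 1 + cfMax := by linarith
  have : 0 < A + 1 + 1 + cfMin := by linarith
  unfold gapLeft gapRight
  field_simp
  have : 0 ≤ 1 + cfMin - cfMax := by linarith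
  nlinarith

lemma one_div_add_one_div_eq {p : ℝ} (hA : 0 ≤ A) (hp : 0 < p) :
    1 / (A + 1 / p) = p / (A * p + 1) := by
  have : A * p + 1 ≠ 0 := by positivity
  field_simp

lemma childGap_eq (hA : 0 ≤ A) :
    1 / (A + gapLeft 1) - 1 / (A + gapRight 1) =
      (1 + cfMin - cfMax) / ((A * (1 + cfMax) + 1) * (A * (2 + cfMin) + 1)) := by
  have := cfMin_bounds
  have := cfMax_bounds
  have : 0 < A * (2 + cfMin) + 1 := by nlinarith
  have : 0 < A * (1 + cfMax) + 1 := by nlinarith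
  rw [gapLeft, gapRight, one_add_one_eq_two, one_div_add_one_div_eq hA (by linarith),
    one_div_add_one_div_eq hA (by linarith), div_sub_div _ _ (by positivity) (by positivity)]
  ring

lemma childGap_le_gap (hA : 1 ≤ A) :
    1 / (A + gapLeft 1) - 1 / (A + gapRight 1) ≤ gapRight A - gapLeft A := by
  have := cfMin_bounds
  have := cfMax_bounds
  rw [childGap_eq (by linarith), gapRight_sub_gapLeft (by linarith)]
  apply div_le_div_of_nonneg_left (by linarith) (by nlinarith)
  apply mul_le_mul <;> nlinarith

lemma childGap_fortyNine_mul_le :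
    (1 / (49 + gapLeft 1) - 1 / (49 + gapRight 1)) * ((1 + gapLeft 48) * (1 + gapRight 48)) ≤
      (gapRight 48 - gapLeft 48) * ((1 + 1 / (49 + gapRight 1)) * (1 + 1 / (49 + gapLeft 1))) := by
  have := cfMin_pos
  have := cfMax_pos
  have := gapLeft_pos zero_le_one
  have := gapRight_pos zero_le_one
  have := gapLeft_pos (A := 48) (by norm_num)
  have := gapRight_pos (A := 48) (by norm_num)
  have hgap : 0 ≤ gapRight 48 - gapLeft 48 := (sub_pos.2 (gapLeft_lt_gapRight (by norm_num))).le
  have hchild₀ : 0 ≤ 1 / (49 + gapLeft 1) - 1 / (49 + gapRight 1) := by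
    rw [childGap_eq (by norm_num)]
    exact div_nonneg (by linarith [cfMin_bounds, cfMax_bounds]) (by positivity)
  have hchild : 1 / (49 + gapLeft 1) - 1 / (49 + gapRight 1) ≤ (gapRight 48 - gapLeft 48) / 2 := by
    rw [childGap_eq (by norm_num), gapRight_sub_gapLeft (by norm_num), div_div]
    apply div_le_div_of_nonneg_left (by linarith [cfMin_bounds, cfMax_bounds]) (by positivity)
    nlinarith [cfMin_bounds, cfMax_bounds]
  have h48 : (1 + gapLeft 48) * (1 + gapRight 48) ≤ 2 := by
    have := cfMin_bounds
    have := cfMax_bounds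
    have : gapLeft 48 ≤ 0.03 := by rw [gapLeft, div_le_iff₀ (by linarith)]; linarith
    have : gapRight 48 ≤ 0.03 := by rw [gapRight, div_le_iff₀ (by linarith)]; linarith
    nlinarith
  calc _ ≤ (gapRight 48 - gapLeft 48) / 2 * 2 := by gcongr
    _ = (gapRight 48 - gapLeft 48) * 1 := by ring
    _ ≤ _ := by
        gcongr
        nlinarith [one_div_pos.2 (by positivity : (0 : ℝ) < 49 + gapRight 1),
          one_div_pos.2 (by positivity : (0 : ℝ) < 49 + gapLeft 1)]

lemma bridgeEnd_sub_cfMin_le (hA : 1 ≤ A) (hA' : A ≤ 48) :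
    bridgeEnd A - cfMin ≤ 250000 * (gapRight A - gapLeft A) := by
  have := cfMin_bounds
  have := cfMax_bounds
  have := bridgeEnd_le_cfMax hA
  rw [gapRight_sub_gapLeft (by linarith), mul_div_assoc', le_div_iff₀ (by nlinarith)]
  have hP : (A + cfMax) * (A + 1 + cfMin) ≤ 2500 := by nlinarith
  have hu : bridgeEnd A - cfMin ≤ 1 := by linarith
  have : 0 ≤ bridgeEnd A - cfMin := by
    linarith [cfMin_lt_gapLeft (by linarith) hA', gapLeft_lt_gapRight (by linarith : 0 ≤ A),
      gapRight_lt_bridgeEnd (by linarith : 0 ≤ A)]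
  nlinarith [mul_le_mul hu hP (by nlinarith) zero_le_one]

lemma le_bridgeEnd_sub_cfMin (hA : 0 ≤ A) (hA' : A ≤ 48) : 1 / 2000 ≤ bridgeEnd A - cfMin := by
  have := cfMin_bounds
  have : 1 / (48 + cfMin) ≤ bridgeEnd A := one_div_le_one_div_of_le (by linarith) (by linarith)
  have : 0.0208 ≤ 1 / (48 + cfMin) := by rw [le_div_iff₀ (by linarith)]; nlinarith
  linarith

end Numerics

/-- The bridge `⟨w, a, _, _⟩` is the convex hull `cfPrepend w '' [cfMin, bridgeEnd a]` of the
cylinders `w ++ [d]`, `d ≥ a`, of the closure of `Fset 49`. -/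
structure Bridge where
  word : List ℕ
  digit : ℕ
  word_mem : ∀ d ∈ word, 1 ≤ d ∧ d ≤ 49
  digit_mem : 1 ≤ digit ∧ digit ≤ 48

namespace Bridge

variable (b : Bridge)

noncomputable def set : Set ℝ :=
  uIcc (cfPrepend b.word cfMin) (cfPrepend b.word (bridgeEnd b.digit))

noncomputable def len : ℝ := imgLen b.word cfMin (bridgeEnd b.digit)

noncomputable def gap : ℝ := imgLen b.word (gapLeft b.digit) (gapRight b.digit)

def root : Bridge := ⟨[], 1, by simp, by norm_num⟩

/-- For `a = 48` the digits `> a` form the single cylinder `w ++ [49]`. -/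
def tail : Bridge :=
  if h : b.digit < 48 then ⟨b.word, b.digit + 1, b.word_mem, by omega⟩
  else ⟨b.word ++ [49], 1, List.forall_mem_append.2 ⟨b.word_mem, by simp⟩, by norm_num⟩

def child : Bridge :=
  ⟨b.word ++ [b.digit], 1, List.forall_mem_append.2 ⟨b.word_mem,
    List.forall_mem_singleton.2 ⟨b.digit_mem.1, by have := b.digit_mem.2; omega⟩⟩, by norm_num⟩

lemma one_le_word : ∀ d ∈ b.word, 1 ≤ d := fun d hd ↦ (b.word_mem d hd).1

lemma digit_bounds : (1 : ℝ) ≤ b.digit ∧ (b.digit : ℝ) ≤ 48 := by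
  exact_mod_cast b.digit_mem

lemma points_lt :
    cfMin < gapLeft b.digit ∧ gapLeft b.digit < gapRight b.digit ∧
      gapRight b.digit < bridgeEnd b.digit ∧ bridgeEnd b.digit ≤ cfMax := by
  obtain ⟨h₁, h₄₈⟩ := b.digit_bounds
  exact ⟨cfMin_lt_gapLeft (by linarith) h₄₈, gapLeft_lt_gapRight (by linarith),
    gapRight_lt_bridgeEnd (by linarith), bridgeEnd_le_cfMax h₁⟩

lemma len_eq_abs :
    b.len = |cfPrepend b.word (bridgeEnd b.digit) - cfPrepend b.word cfMin| := by
  obtain ⟨h₁, h₂, h₃, -⟩ := b.points_lt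
  exact (abs_cfPrepend_sub b.one_le_word cfMin_pos.le (by linarith)).symm

lemma len_nonneg : 0 ≤ b.len := by
  obtain ⟨h₁, h₂, h₃, -⟩ := b.points_lt
  exact imgLen_nonneg b.one_le_word cfMin_pos.le (by linarith)

lemma gap_pos : 0 < b.gap := by
  obtain ⟨h₁, h₂, -⟩ := b.points_lt
  exact div_pos (by linarith) (mul_pos (den_pos b.one_le_word (by linarith [cfMin_pos]))
    (den_pos b.one_le_word (by linarith [cfMin_pos])))

lemma tail_set :
    b.tail.set = uIcc (cfPrepend b.word cfMin) (cfPrepend b.word (gapLeft b.digit)) := by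
  unfold tail
  split_ifs with h
  · simp only [set, gapLeft, bridgeEnd]
    push_cast
    rfl
  · have h48 : b.digit = 48 := by have := b.digit_mem; omega
    simp only [set, h48, cfPrepend_append, Nat.cast_one, Nat.cast_ofNat, bridgeEnd_one,
      one_div_add_cfMax]
    rw [uIcc_comm, gapLeft]
    norm_num

lemma tail_len : b.tail.len = imgLen b.word cfMin (gapLeft b.digit) := by
  unfold tail
  split_ifs with h
  · simp only [len, gapLeft, bridgeEnd]
    push_cast
    rfl
  · have h48 : b.digit = 48 := by have := b.digit_mem; omega
    simp only [len, h48, Nat.cast_one, bridgeEnd_one]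
    rw [imgLen_append b.one_le_word (by norm_num) cfMin_pos.le
      (by linarith [cfMin_bounds, cfMax_bounds]), Nat.cast_ofNat, one_div_add_cfMax, gapLeft]
    norm_num

lemma child_set :
    b.child.set =
      uIcc (cfPrepend b.word (gapRight b.digit)) (cfPrepend b.word (bridgeEnd b.digit)) := by
  simp only [child, set, cfPrepend_append, Nat.cast_one, bridgeEnd_one]
  rw [uIcc_comm]
  rfl

lemma child_len : b.child.len = imgLen b.word (gapRight b.digit) (bridgeEnd b.digit) := by
  simp only [child, len, Nat.cast_one, bridgeEnd_one]
  rw [imgLen_append b.one_le_word b.digit_mem.1 cfMin_pos.le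
    (by linarith [cfMin_bounds, cfMax_bounds])]
  rfl

lemma gap_le_tail_len : b.gap ≤ b.tail.len := by
  obtain ⟨h₁, h₂, h₃, -⟩ := b.points_lt
  obtain ⟨ha, ha'⟩ := b.digit_bounds
  have hm := cfMin_pos
  rw [tail_len]
  refine imgLen_le_imgLen b.one_le_word (by linarith) h₂.le hm.le (by linarith) le_rfl h₁.le
    le_rfl h₂.le ?_
  exact mul_le_mul_of_nonneg_right (gapRight_sub_gapLeft_le ha ha') (by nlinarith)

lemma gap_le_child_len : b.gap ≤ b.child.len := by
  obtain ⟨h₁, h₂, h₃, -⟩ := b.points_lt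
  have hm := cfMin_pos
  rw [child_len]
  refine imgLen_le_imgLen b.one_le_word (by linarith) h₂.le (by linarith) (by linarith) h₂.le
    le_rfl h₃.le le_rfl ?_
  have := mul_le_mul_of_nonneg_right (gap_mul_le b.digit_bounds.1)
    (by linarith : 0 ≤ 1 + gapRight b.digit)
  linarith

lemma tail_gap_le : b.tail.gap ≤ b.gap := by
  obtain ⟨h₁, h₂, h₃, -⟩ := b.points_lt
  obtain ⟨ha, ha'⟩ := b.digit_bounds
  have hm := cfMin_bounds
  have hM := cfMax_bounds
  unfold tail
  split_ifs with h
  · simp only [gap]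
    push_cast
    have hl : gapLeft (b.digit + 1) ≤ gapLeft b.digit :=
      one_div_le_one_div_of_le (by linarith) (by linarith)
    have hr : gapRight (b.digit + 1) ≤ gapRight b.digit :=
      one_div_le_one_div_of_le (by linarith) (by linarith)
    exact imgLen_le_imgLen b.one_le_word (gapLeft_pos (by linarith)).le
      (gapLeft_lt_gapRight (by linarith)).le (by linarith) (by linarith) hl le_rfl hr le_rfl
      (gap_succ_mul_le (by linarith))
  · have h48 : b.digit = 48 := by have := b.digit_mem; omega
    have hL := gapLeft_one_bounds
    have hR := gapRight_one_bounds
    simp only [gap, h48, Nat.cast_one, Nat.cast_ofNat]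
    rw [imgLen_append b.one_le_word (by norm_num) (by linarith) (by linarith), Nat.cast_ofNat]
    rw [h48] at h₁ h₂
    push_cast at h₁ h₂
    refine imgLen_le_imgLen b.one_le_word (one_div_nonneg.2 (by linarith))
      (one_div_le_one_div_of_le (by linarith) (by linarith)) (by linarith) (by linarith)
      ?_ le_rfl ?_ le_rfl childGap_fortyNine_mul_le
    · rw [gapLeft]
      exact one_div_le_one_div_of_le (by linarith) (by linarith)
    · rw [gapRight]
      exact one_div_le_one_div_of_le (by linarith) (by linarith)

lemma child_gap_le : b.child.gap ≤ b.gap := by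
  obtain ⟨h₁, h₂, h₃, -⟩ := b.points_lt
  obtain ⟨ha, ha'⟩ := b.digit_bounds
  have hm := cfMin_bounds
  have hM := cfMax_bounds
  have hL := gapLeft_one_bounds
  have hR := gapRight_one_bounds
  simp only [child, gap, Nat.cast_one]
  rw [imgLen_append b.one_le_word b.digit_mem.1 (by linarith) (by linarith)]
  refine imgLen_le_imgLen b.one_le_word (one_div_nonneg.2 (by linarith))
    (one_div_le_one_div_of_le (by linarith) (by linarith)) (by linarith) (by linarith)
    le_rfl ?_ le_rfl ?_ ?_
  · rw [gapLeft]
    exact one_div_le_one_div_of_le (by linarith) (by linarith)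
  · rw [gapRight]
    exact one_div_le_one_div_of_le (by linarith) (by linarith)
  · have : 0 ≤ 1 / (b.digit + gapRight 1) := one_div_nonneg.2 (by linarith)
    have : 0 ≤ 1 / (b.digit + gapLeft 1) := one_div_nonneg.2 (by linarith)
    exact mul_le_mul_of_nonneg_right (childGap_le_gap ha) (by positivity)

lemma tail_len_add_gap_add_child_len : b.tail.len + b.gap + b.child.len = b.len := by
  obtain ⟨h₁, h₂, h₃, -⟩ := b.points_lt
  have hm := cfMin_pos
  rw [tail_len, child_len, gap, len, imgLen_add b.one_le_word hm.le (by linarith) (by linarith),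
    imgLen_add b.one_le_word hm.le (by linarith) (by linarith)]

lemma len_le_gap : b.len ≤ 1000000 * b.gap := by
  obtain ⟨h₁, h₂, h₃, -⟩ := b.points_lt
  obtain ⟨ha, ha'⟩ := b.digit_bounds
  have hm := cfMin_bounds
  have hC := bridgeEnd_sub_cfMin_le ha ha'
  have hL : gapLeft b.digit ≤ 1 := by rw [gapLeft, div_le_one (by linarith)]; linarith
  refine imgLen_le_mul_imgLen b.one_le_word (by linarith) (by linarith) (by linarith)
    (by linarith) h₁.le le_rfl le_rfl (by linarith) ?_
  have : 0 ≤ 1 + bridgeEnd b.digit := by linarith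
  have : 0 ≤ (1 + gapLeft b.digit) * (1 + bridgeEnd b.digit) := by nlinarith
  calc (bridgeEnd b.digit - cfMin) * ((1 + gapLeft b.digit) * (1 + bridgeEnd b.digit))
      ≤ (250000 * (gapRight b.digit - gapLeft b.digit)) * (4 * (1 + bridgeEnd b.digit)) := by
        gcongr
        linarith
    _ ≤ 1000000 * (gapRight b.digit - gapLeft b.digit) *
          ((1 + cfMin) * (1 + bridgeEnd b.digit)) := by
        have : 0 ≤ gapRight b.digit - gapLeft b.digit := by linarith
        nlinarith [mul_nonneg this (by linarith : 0 ≤ 1 + bridgeEnd b.digit)]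

lemma one_div_le_len : 1 / (8000 * 2500 ^ b.word.length) ≤ b.len := by
  obtain ⟨h₁, h₂, h₃, h₄⟩ := b.points_lt
  have hm := cfMin_bounds
  have hM := cfMax_bounds
  have hd₀ := den_pos b.one_le_word (by linarith : 0 ≤ cfMin)
  have hd₃ := den_pos b.one_le_word (by linarith : 0 ≤ bridgeEnd b.digit)
  have hD : den b.word cfMin * den b.word (bridgeEnd b.digit) ≤ 4 * 2500 ^ b.word.length := by
    have e₀ := den_le_pow b.word_mem (by linarith : cfMin ≤ 1)
    have e₃ := den_le_pow b.word_mem (by linarith : bridgeEnd b.digit ≤ 1)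
    norm_num at e₀ e₃
    calc _ ≤ (2 * 50 ^ b.word.length) * (2 * 50 ^ b.word.length) :=
          mul_le_mul e₀ e₃ hd₃.le (by positivity)
      _ = 4 * 2500 ^ b.word.length := by rw [mul_mul_mul_comm, ← mul_pow]; norm_num
  have hC := le_bridgeEnd_sub_cfMin (by linarith [b.digit_bounds.1]) b.digit_bounds.2
  rw [len, imgLen, div_le_div_iff₀ (by positivity) (by positivity)]
  nlinarith [mul_le_mul_of_nonneg_right hC (by positivity : (0 : ℝ) ≤ 8000 * 2500 ^ b.word.length)]

lemma set_subset_image : b.set ⊆ cfPrepend b.word '' Icc cfMin cfMax := by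
  obtain ⟨h₁, h₂, h₃, h₄⟩ := b.points_lt
  have hm := cfMin_pos
  have hmu : cfMin ≤ bridgeEnd b.digit := by linarith
  refine (intermediate_value_uIcc ((continuousOn_cfPrepend b.one_le_word).mono ?_)).trans
    (image_mono ?_)
  · rw [uIcc_of_le hmu]
    exact fun x hx ↦ hm.le.trans hx.1
  · rw [uIcc_of_le hmu]
    exact Icc_subset_Icc le_rfl h₄

def Refines (b' b : Bridge) : Prop := b' = b.tail ∨ b' = b.child

variable {b}

lemma Refines.set_subset {b' : Bridge} (h : b'.Refines b) : b'.set ⊆ b.set := by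
  obtain ⟨h₁, h₂, h₃, -⟩ := b.points_lt
  have hm := cfMin_pos
  have hf := cfPrepend_monotoneOn_or_antitoneOn b.one_le_word
  have hm' : cfMin ∈ Ici 0 := mem_Ici.2 hm.le
  have he : bridgeEnd b.digit ∈ Ici (0 : ℝ) := mem_Ici.2 (by linarith)
  rcases h with h | h <;> rw [h]
  · rw [tail_set, set]
    exact uIcc_subset_uIcc left_mem_uIcc (mem_uIcc_of_monotoneOn_or_antitoneOn hf hm'
      (mem_Ici.2 (by linarith)) he h₁.le (by linarith))
  · rw [child_set, set]
    exact uIcc_subset_uIcc (mem_uIcc_of_monotoneOn_or_antitoneOn hf hm'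
      (mem_Ici.2 (by linarith)) he (by linarith) h₃.le) right_mem_uIcc

lemma Refines.gap_le_len {b' : Bridge} (h : b'.Refines b) : b.gap ≤ b'.len := by
  rcases h with h | h <;> rw [h]
  exacts [b.gap_le_tail_len, b.gap_le_child_len]

lemma Refines.gap_le_gap {b' : Bridge} (h : b'.Refines b) : b'.gap ≤ b.gap := by
  rcases h with h | h <;> rw [h]
  exacts [b.tail_gap_le, b.child_gap_le]

lemma Refines.len_add_gap_le {b' : Bridge} (h : b'.Refines b) : b'.len + b.gap ≤ b.len := by
  have := b.tail_len_add_gap_add_child_len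
  have := b.gap_le_tail_len
  have := b.gap_le_child_len
  have := b.gap_pos
  rcases h with h | h <;> rw [h] <;> linarith

lemma exists_refines_inter_nonempty (b : Bridge) {α β : ℝ} (hgap : b.gap ≤ |β - α|)
    (h : (b.set ∩ uIcc α β).Nonempty) :
    ∃ b' : Bridge, b'.Refines b ∧ (b'.set ∩ uIcc α β).Nonempty := by
  obtain ⟨h₁, h₂, h₃, -⟩ := b.points_lt
  have hm := cfMin_pos
  rw [gap, ← abs_cfPrepend_sub b.one_le_word (by linarith) h₂.le] at hgap
  rcases uIcc_inter_nonempty_or (cfPrepend_monotoneOn_or_antitoneOn b.one_le_word)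
    (mem_Ici.2 hm.le) (mem_Ici.2 (by linarith)) (mem_Ici.2 (by linarith))
    (mem_Ici.2 (by linarith)) h₁.le h₂.le h₃.le hgap h with h' | h'
  · exact ⟨b.tail, .inl rfl, by rwa [tail_set]⟩
  · exact ⟨b.child, .inr rfl, by rwa [child_set]⟩

end Bridge

lemma mem_Fset_of_forall_exists_bridge {x : ℝ}
    (h : ∀ L, ∃ b : Bridge, L ≤ b.word.length ∧ x ∈ b.set) : x ∈ Fset 49 := by
  refine mem_Fset_of_forall_gaussMap_iterate_mem fun k ↦ ?_
  obtain ⟨b, hk, hx⟩ := h k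
  obtain ⟨ξ, hξ, rfl⟩ := b.set_subset_image hx
  have := cfMin_bounds
  have := cfMax_bounds
  rw [gaussMap_iterate_cfPrepend b.one_le_word ⟨by linarith [hξ.1], by linarith [hξ.2]⟩ hk]
  exact cfPrepend_mem_Icc (fun d hd ↦ b.word_mem d (List.mem_of_mem_drop hd)) hξ

lemma exists_le_length_of_len_le {b : ℕ → Bridge} {C r : ℝ} (hr₀ : 0 ≤ r) (hr : r < 1)
    (h : ∀ n, (b n).len ≤ r ^ n * C) (L : ℕ) : ∃ n, L ≤ (b n).word.length := by
  by_contra! hL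
  have hε : (0 : ℝ) < 1 / (8000 * 2500 ^ L) := by positivity
  have hlim := (tendsto_pow_atTop_nhds_zero_of_lt_one hr₀ hr).mul_const C
  rw [zero_mul] at hlim
  obtain ⟨n, hn⟩ := (hlim.eventually (gt_mem_nhds hε)).exists
  have : 1 / (8000 * 2500 ^ L) ≤ 1 / (8000 * (2500 : ℝ) ^ (b n).word.length) :=
    one_div_le_one_div_of_le (by positivity) (by gcongr <;> [norm_num; exact (hL n).le])
  linarith [h n, (b n).one_div_le_len]

lemma mem_Fset_of_forall_mem_set {b : ℕ → Bridge} {C r : ℝ} (hr₀ : 0 ≤ r) (hr : r < 1)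
    (hlen : ∀ n, (b n).len ≤ r ^ n * C) {x : ℝ} (hx : ∀ n, x ∈ (b n).set) : x ∈ Fset 49 :=
  mem_Fset_of_forall_exists_bridge fun L ↦
    let ⟨n, hn⟩ := exists_le_length_of_len_le hr₀ hr hlen L
    ⟨b n, hn, hx n⟩

def Linked (t : ℝ) (b₁ b₂ : Bridge) : Prop :=
  t ∈ b₁.set + b₂.set ∧ b₁.gap ≤ b₂.len ∧ b₂.gap ≤ b₁.len

namespace Linked

variable {t : ℝ} {b₁ b₂ : Bridge}

lemma symm (h : Linked t b₁ b₂) : Linked t b₂ b₁ := ⟨by rw [add_comm]; exact h.1, h.2.2, h.2.1⟩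

lemma exists_refines_left (h : Linked t b₁ b₂) (hg : b₂.gap ≤ b₁.gap) :
    ∃ b₁' : Bridge, b₁'.Refines b₁ ∧ Linked t b₁' b₂ := by
  obtain ⟨ht, h₁₂, h₂₁⟩ := h
  obtain ⟨p, hp, q, hq, rfl⟩ := mem_add.1 ht
  have hlen : b₁.gap ≤ |(p + q - cfPrepend b₂.word (bridgeEnd b₂.digit)) -
      (p + q - cfPrepend b₂.word cfMin)| := by
    rwa [sub_sub_sub_cancel_left, abs_sub_comm, ← b₂.len_eq_abs]
  have hpq : p ∈ uIcc (p + q - cfPrepend b₂.word cfMin)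
      (p + q - cfPrepend b₂.word (bridgeEnd b₂.digit)) := by
    rw [← preimage_const_sub_uIcc, mem_preimage, add_sub_cancel_left]
    exact hq
  obtain ⟨b₁', hr, p', hp', hp'q⟩ := b₁.exists_refines_inter_nonempty hlen ⟨p, hp, hpq⟩
  rw [← preimage_const_sub_uIcc, mem_preimage] at hp'q
  exact ⟨b₁', hr, mem_add.2 ⟨p', hp', _, hp'q, add_sub_cancel _ _⟩, hr.gap_le_gap.trans h₁₂,
    hg.trans hr.gap_le_len⟩

lemma exists_next (h : Linked t b₁ b₂) :
    ∃ s : Bridge × Bridge, Linked t s.1 s.2 ∧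
      (s.1.set ⊆ b₁.set ∧ s.2.set ⊆ b₂.set ∧
        s.1.len + s.2.len ≤ (1 - 1 / 2000000) * (b₁.len + b₂.len)) := by
  wlog hg : b₂.gap ≤ b₁.gap generalizing b₁ b₂
  · obtain ⟨⟨b₂', b₁'⟩, h', h₂, h₁, hlen⟩ := this h.symm (le_of_not_ge hg)
    exact ⟨(b₁', b₂'), h'.symm, h₁, h₂, by linarith⟩
  obtain ⟨b₁', hr, h'⟩ := h.exists_refines_left hg
  refine ⟨(b₁', b₂), h', hr.set_subset, subset_rfl, ?_⟩
  -- the removed gap is the larger one, and every gap is at least `10⁻⁶` of its bridge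
  linarith [hr.len_add_gap_le, b₁.len_le_gap, b₂.len_le_gap]

lemma exists_mem_Fset_eq_add (h : Linked t b₁ b₂) : ∃ x ∈ Fset 49, ∃ y ∈ Fset 49, t = x + y := by
  obtain ⟨s, hs⟩ := exists_seq_of_forall_exists (P := fun s : Bridge × Bridge ↦ Linked t s.1 s.2)
    (a := (b₁, b₂)) h fun _ hs ↦ hs.exists_next
  set C := (s 0).1.len + (s 0).2.len
  have hdecay n : (s n).1.len + (s n).2.len ≤ (1 - 1 / 2000000) ^ n * C :=
    le_geom (u := fun n ↦ (s n).1.len + (s n).2.len) (by norm_num) n fun k _ ↦ (hs k).2.2.2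
  obtain ⟨x, y, hx, hy, rfl⟩ := exists_forall_mem_add_eq (A := fun n ↦ (s n).1.set)
    (B := fun n ↦ (s n).2.set) (fun _ ↦ isCompact_uIcc) (fun _ ↦ isCompact_uIcc)
    (fun n ↦ (hs n).2.1) (fun n ↦ (hs n).2.2.1) (fun n ↦ (hs n).1.1)
  have hr₀ : (0 : ℝ) ≤ 1 - 1 / 2000000 := by norm_num
  have hr : (1 : ℝ) - 1 / 2000000 < 1 := by norm_num
  refine ⟨x, mem_Fset_of_forall_mem_set (C := C) hr₀ hr (fun n ↦ ?_) hx,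
    y, mem_Fset_of_forall_mem_set (C := C) hr₀ hr (fun n ↦ ?_) hy, rfl⟩ <;>
  linarith [hdecay n, (s n).1.len_nonneg, (s n).2.len_nonneg]

end Linked

lemma linked_root {t : ℝ} (ht : t ∈ Icc (1 / 6 : ℝ) (11 / 6)) : Linked t .root .root := by
  have hm := cfMin_bounds
  have hM := cfMax_bounds
  have hL := gapLeft_one_bounds
  have hR := gapRight_one_bounds
  have hset : Bridge.root.set = uIcc cfMin cfMax := by
    simp [Bridge.set, Bridge.root, cfPrepend, bridgeEnd_one]
  have hlen : Bridge.root.len = cfMax - cfMin := by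
    simp [Bridge.len, Bridge.root, imgLen_nil, bridgeEnd_one]
  have hgap : Bridge.root.gap = gapRight 1 - gapLeft 1 := by
    simp [Bridge.gap, Bridge.root, imgLen_nil]
  have ht2 : t / 2 ∈ Bridge.root.set := by
    rw [hset, uIcc_of_le (by linarith)]
    constructor <;> linarith [ht.1, ht.2]
  refine ⟨mem_add.2 ⟨t / 2, ht2, t / 2, ht2, add_halves t⟩, ?_, ?_⟩ <;>
  · rw [hgap, hlen]
    linarith

end SumsetF49

/-- `F₄₉ + F₄₉ ⊇ [1/6, 11/6]`. -/
theorem stmt12 :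
    ∀ t ∈ Set.Icc (1 / 6 : ℝ) (11 / 6),
      ∃ x ∈ Fset 49, ∃ y ∈ Fset 49, t = x + y :=
  fun _ ht ↦ (SumsetF49.linked_root ht).exists_mem_Fset_eq_add
end

section
/- Let 0 < ε < 1/2, let β satisfy (ε/(1−ε))² ≤ β < 1, and let ℓ > 0. Suppose p₁, p₂ ∈ ℤ and q₁, q₂ are positive integers with p₁/q₁ ≠ p₂/q₂, and suppose ℓ < (1−2ε)/qᵢ² ≤ ℓ/β for i = 1, 2. Then |p₁/q₁ − p₂/q₂| − ε/q₁² − ε/q₂² > ℓ. Consequently, any interval of length ℓ intersects at most one of the balls B(p/q, ε/q²) over rationals p/q with ℓ < (1−2ε)/q² ≤ ℓ/β. -/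
lemma aux14 (ε β ℓ u v : ℝ) (hε0 : 0 < ε) (hε : ε < 1 / 2)
    (hβ1 : (ε / (1 - ε)) ^ 2 ≤ β) (hβ2 : β < 1) (hℓ : 0 < ℓ)
    (hv : 0 < v) (hvu : v ≤ u)
    (h1 : ℓ < (1 - 2 * ε) * v ^ 2) (h2 : (1 - 2 * ε) * u ^ 2 ≤ ℓ / β) :
    u * v - ε * u ^ 2 - ε * v ^ 2 > ℓ := by
  have h1ε : 0 < 1 - ε := by linarith
  have h2ε : 0 < 1 - 2 * ε := by linarith
  have hβ0 : 0 < β := lt_of_lt_of_le (by positivity) hβ1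
  have h2' : (1 - 2 * ε) * u ^ 2 * β ≤ ℓ := (le_div_iff₀ hβ0).mp h2
  have hβ1' : ε ^ 2 ≤ β * (1 - ε) ^ 2 := by
    rw [div_pow] at hβ1
    have := (div_le_iff₀ (by positivity)).mp hβ1
    linarith
  have hu : 0 < u := lt_of_lt_of_le hv hvu
  have hbuv : β * u ^ 2 < v ^ 2 := by nlinarith
  have hkey : ε * u < (1 - ε) * v := by
    have hsq : (ε * u) ^ 2 < ((1 - ε) * v) ^ 2 := by nlinarith
    nlinarith [mul_pos hε0 hu, mul_pos h1ε hv]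
  nlinarith [mul_nonneg (sub_nonneg.mpr hvu) (sub_nonneg.mpr hkey.le)]

theorem stmt14 (ε β ℓ : ℝ) (hε0 : 0 < ε) (hε : ε < 1 / 2)
    (hβ1 : (ε / (1 - ε)) ^ 2 ≤ β) (hβ2 : β < 1) (hℓ : 0 < ℓ) :
    (∀ (p₁ p₂ : ℤ) (q₁ q₂ : ℕ), 0 < q₁ → 0 < q₂ →
      (p₁ : ℝ) / q₁ ≠ (p₂ : ℝ) / q₂ →
      ℓ < (1 - 2 * ε) / (q₁ : ℝ) ^ 2 → (1 - 2 * ε) / (q₁ : ℝ) ^ 2 ≤ ℓ / β →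
      ℓ < (1 - 2 * ε) / (q₂ : ℝ) ^ 2 → (1 - 2 * ε) / (q₂ : ℝ) ^ 2 ≤ ℓ / β →
      |(p₁ : ℝ) / q₁ - (p₂ : ℝ) / q₂| - ε / (q₁ : ℝ) ^ 2 - ε / (q₂ : ℝ) ^ 2 > ℓ) ∧
    (∀ (a : ℝ) (p₁ p₂ : ℤ) (q₁ q₂ : ℕ), 0 < q₁ → 0 < q₂ →
      ℓ < (1 - 2 * ε) / (q₁ : ℝ) ^ 2 → (1 - 2 * ε) / (q₁ : ℝ) ^ 2 ≤ ℓ / β →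
      ℓ < (1 - 2 * ε) / (q₂ : ℝ) ^ 2 → (1 - 2 * ε) / (q₂ : ℝ) ^ 2 ≤ ℓ / β →
      (Set.Icc ((p₁ : ℝ) / q₁ - ε / (q₁ : ℝ) ^ 2) ((p₁ : ℝ) / q₁ + ε / (q₁ : ℝ) ^ 2) ∩
        Set.Icc a (a + ℓ)).Nonempty →
      (Set.Icc ((p₂ : ℝ) / q₂ - ε / (q₂ : ℝ) ^ 2) ((p₂ : ℝ) / q₂ + ε / (q₂ : ℝ) ^ 2) ∩
        Set.Icc a (a + ℓ)).Nonempty →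
      (p₁ : ℝ) / q₁ = (p₂ : ℝ) / q₂) := by
  have main : ∀ (p₁ p₂ : ℤ) (q₁ q₂ : ℕ), 0 < q₁ → 0 < q₂ →
      (p₁ : ℝ) / q₁ ≠ (p₂ : ℝ) / q₂ →
      ℓ < (1 - 2 * ε) / (q₁ : ℝ) ^ 2 → (1 - 2 * ε) / (q₁ : ℝ) ^ 2 ≤ ℓ / β →
      ℓ < (1 - 2 * ε) / (q₂ : ℝ) ^ 2 → (1 - 2 * ε) / (q₂ : ℝ) ^ 2 ≤ ℓ / β →
      |(p₁ : ℝ) / q₁ - (p₂ : ℝ) / q₂| - ε / (q₁ : ℝ) ^ 2 - ε / (q₂ : ℝ) ^ 2 > ℓ := by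
    intro p₁ p₂ q₁ q₂ hq₁ hq₂ hne h11 h12 h21 h22
    have hQ1 : (0:ℝ) < (q₁:ℝ) := by exact_mod_cast hq₁
    have hQ2 : (0:ℝ) < (q₂:ℝ) := by exact_mod_cast hq₂
    -- integer separation
    have hneZ : (p₁ * (q₂:ℤ)) ≠ p₂ * (q₁:ℤ) := by
      intro h
      apply hne
      rw [div_eq_div_iff hQ1.ne' hQ2.ne']
      exact_mod_cast h
    have h1le : (1:ℤ) ≤ |p₁ * (q₂:ℤ) - p₂ * (q₁:ℤ)| :=
      Int.one_le_abs (sub_ne_zero.mpr hneZ)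
    have h1leR : (1:ℝ) ≤ |(p₁:ℝ) * (q₂:ℝ) - (p₂:ℝ) * (q₁:ℝ)| := by
      exact_mod_cast h1le
    have habs : 1 / ((q₁:ℝ) * q₂) ≤ |(p₁ : ℝ) / q₁ - (p₂ : ℝ) / q₂| := by
      rw [div_sub_div _ _ hQ1.ne' hQ2.ne', abs_div, abs_of_pos (mul_pos hQ1 hQ2)]
      gcongr
      have h : (p₁:ℝ) * q₂ - q₁ * p₂ = (p₁:ℝ) * q₂ - p₂ * q₁ := by ring
      rw [h]; exact h1leR
    -- translate hypotheses
    have hu2 : (1 - 2 * ε) * (1 / (q₁:ℝ)) ^ 2 ≤ ℓ / β := by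
      rw [div_pow, one_pow, mul_one_div]; exact h12
    have hv1 : ℓ < (1 - 2 * ε) * (1 / (q₂:ℝ)) ^ 2 := by
      rw [div_pow, one_pow, mul_one_div]; exact h21
    have hv2 : (1 - 2 * ε) * (1 / (q₂:ℝ)) ^ 2 ≤ ℓ / β := by
      rw [div_pow, one_pow, mul_one_div]; exact h22
    have hu1' : ℓ < (1 - 2 * ε) * (1 / (q₁:ℝ)) ^ 2 := by
      rw [div_pow, one_pow, mul_one_div]; exact h11
    have key : (1/(q₁:ℝ)) * (1/(q₂:ℝ)) - ε * (1/(q₁:ℝ))^2 - ε * (1/(q₂:ℝ))^2 > ℓ := by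
      rcases le_total (1/(q₁:ℝ)) (1/(q₂:ℝ)) with h | h
      · have := aux14 ε β ℓ (1/(q₂:ℝ)) (1/(q₁:ℝ)) hε0 hε hβ1 hβ2 hℓ (by positivity) h hu1' hv2
        linarith
      · exact aux14 ε β ℓ (1/(q₁:ℝ)) (1/(q₂:ℝ)) hε0 hε hβ1 hβ2 hℓ (by positivity) h hv1 hu2
    have e1 : ε / (q₁:ℝ)^2 = ε * (1/(q₁:ℝ))^2 := by field_simp
    have e2 : ε / (q₂:ℝ)^2 = ε * (1/(q₂:ℝ))^2 := by field_simp
    have e3 : 1 / ((q₁:ℝ) * q₂) = (1/(q₁:ℝ)) * (1/(q₂:ℝ)) := by field_simp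
    rw [e1, e2]
    linarith [habs, key, e3 ▸ habs]
  refine ⟨main, ?_⟩
  intro a p₁ p₂ q₁ q₂ hq₁ hq₂ h11 h12 h21 h22 ⟨x₁, hx₁b, hx₁i⟩ ⟨x₂, hx₂b, hx₂i⟩
  by_contra hne
  have hgap := main p₁ p₂ q₁ q₂ hq₁ hq₂ hne h11 h12 h21 h22
  simp only [Set.mem_Icc] at hx₁b hx₁i hx₂b hx₂i
  have t1 : |(p₁:ℝ)/q₁ - x₁| ≤ ε / (q₁:ℝ)^2 := abs_le.mpr ⟨by linarith [hx₁b.2], by linarith [hx₁b.1]⟩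
  have t2 : |(p₂:ℝ)/q₂ - x₂| ≤ ε / (q₂:ℝ)^2 := abs_le.mpr ⟨by linarith [hx₂b.2], by linarith [hx₂b.1]⟩
  have t3 : |x₁ - x₂| ≤ ℓ := abs_le.mpr ⟨by linarith [hx₁i.1, hx₂i.2], by linarith [hx₁i.2, hx₂i.1]⟩
  have tri : |(p₁:ℝ)/q₁ - (p₂:ℝ)/q₂| ≤ |(p₁:ℝ)/q₁ - x₁| + |x₁ - x₂| + |x₂ - (p₂:ℝ)/q₂| := by
    calc |(p₁:ℝ)/q₁ - (p₂:ℝ)/q₂| ≤ |(p₁:ℝ)/q₁ - x₁| + |x₁ - (p₂:ℝ)/q₂| := abs_sub_le _ _ _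
      _ ≤ |(p₁:ℝ)/q₁ - x₁| + (|x₁ - x₂| + |x₂ - (p₂:ℝ)/q₂|) := by gcongr; exact abs_sub_le _ _ _
      _ = _ := by ring
  rw [abs_sub_comm x₂] at tri
  linarith [t2, abs_sub_comm ((p₂:ℝ)/q₂) x₂ ▸ t2]
end

section
/- For every ε with 1/3 < ε < 1, the middle-ε Cantor set M_ε contains no arithmetic progression of length 3; that is, there are no a ∈ ℝ and t > 0 with a, a + t, and a + 2t all in M_ε. -/
/-!
Write `λ = (1 - ε) / 2 < 1 / 3` and code points of `M_ε` by binary digit sequences. A point whose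
first digit is `0` lies in `[0, λ]`, one whose first digit is `1` lies in `[1 - λ, 1]`. If the
endpoints `x`, `z` of a progression `x, y, z` differ in their first digit, the midpoint `y` lies in
`[(1 - λ) / 2, (1 + λ) / 2]`, which `λ < 1 / 3` places inside the gap `(λ, 1 - λ)`. Otherwise `y`
shares that first digit too, and dropping it maps the progression to one coded by the shifted
sequences; induction on the first digit where the endpoints differ finishes the proof.
-/

namespace MiddleCantor

/-- The point of the middle-`ε` Cantor set with digit sequence `b`, where `l = (1 - ε) / 2`. -/
noncomputable def cantorMap (l : ℝ) (b : ℕ → Bool) : ℝ :=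
  (1 - l) * ∑' n : ℕ, (if b n then l ^ n else 0)

theorem summable_digits {l : ℝ} (hl0 : 0 ≤ l) (hl1 : l < 1) (b : ℕ → Bool) :
    Summable (fun n : ℕ => (if b n then l ^ n else 0 : ℝ)) :=
  Summable.of_nonneg_of_le (fun n => by split_ifs <;> positivity)
    (fun n => by split_ifs <;> simp [pow_nonneg hl0])
    (summable_geometric_of_lt_one hl0 hl1)

theorem cantorMap_nonneg {l : ℝ} (hl0 : 0 ≤ l) (hl1 : l ≤ 1) (b : ℕ → Bool) :
    0 ≤ cantorMap l b :=
  mul_nonneg (by linarith) (tsum_nonneg fun n => by split_ifs <;> positivity)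

theorem cantorMap_le_one {l : ℝ} (hl0 : 0 ≤ l) (hl1 : l < 1) (b : ℕ → Bool) :
    cantorMap l b ≤ 1 := by
  have hpos : 0 < 1 - l := by linarith
  have hsum : ∑' n : ℕ, (if b n then l ^ n else 0 : ℝ) ≤ (1 - l)⁻¹ := by
    rw [← tsum_geometric_of_lt_one hl0 hl1]
    exact (summable_digits hl0 hl1 b).tsum_le_tsum
      (fun n => by split_ifs <;> simp [pow_nonneg hl0]) (summable_geometric_of_lt_one hl0 hl1)
  calc cantorMap l b ≤ (1 - l) * (1 - l)⁻¹ := mul_le_mul_of_nonneg_left hsum hpos.le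
    _ = 1 := mul_inv_cancel₀ hpos.ne'

theorem cantorMap_eq_head_add_tail {l : ℝ} (hl0 : 0 ≤ l) (hl1 : l < 1) (b : ℕ → Bool) :
    cantorMap l b = (if b 0 then 1 - l else 0) + l * cantorMap l (fun n => b (n + 1)) := by
  have htail : ∑' n : ℕ, (if b (n + 1) then l ^ (n + 1) else 0 : ℝ)
      = l * ∑' n : ℕ, (if b (n + 1) then l ^ n else 0 : ℝ) := by
    rw [← tsum_mul_left]
    congr 1 with n
    split_ifs <;> ring
  unfold cantorMap
  rw [(summable_digits hl0 hl1 b).tsum_eq_zero_add, htail]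
  split_ifs <;> ring

theorem cantorMap_le_of_head_false {l : ℝ} (hl0 : 0 ≤ l) (hl1 : l < 1) {b : ℕ → Bool}
    (hb : b 0 = false) : cantorMap l b ≤ l := by
  have := mul_le_mul_of_nonneg_left (cantorMap_le_one hl0 hl1 fun n => b (n + 1)) hl0
  rw [cantorMap_eq_head_add_tail hl0 hl1, hb]
  simpa using this

theorem le_cantorMap_of_head_true {l : ℝ} (hl0 : 0 ≤ l) (hl1 : l < 1) {b : ℕ → Bool}
    (hb : b 0 = true) : 1 - l ≤ cantorMap l b := by
  have := mul_nonneg hl0 (cantorMap_nonneg hl0 hl1.le fun n => b (n + 1))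
  rw [cantorMap_eq_head_add_tail hl0 hl1, hb]
  simpa using this

theorem cantorMap_le_or_one_sub_le {l : ℝ} (hl0 : 0 ≤ l) (hl1 : l < 1) (b : ℕ → Bool) :
    cantorMap l b ≤ l ∨ 1 - l ≤ cantorMap l b := by
  cases hb : b 0
  exacts [.inl (cantorMap_le_of_head_false hl0 hl1 hb),
    .inr (le_cantorMap_of_head_true hl0 hl1 hb)]

theorem cantorMap_add_ne_two_mul_of_head_ne {l : ℝ} (hl0 : 0 ≤ l) (hl3 : l < 1 / 3)
    {b c : ℕ → Bool} (hbc : b 0 ≠ c 0) (d : ℕ → Bool) :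
    cantorMap l b + cantorMap l c ≠ 2 * cantorMap l d := by
  have hl1 : l < 1 := by linarith
  have hd := cantorMap_le_or_one_sub_le hl0 hl1 d
  have hb1 := cantorMap_le_one hl0 hl1 b
  have hc1 := cantorMap_le_one hl0 hl1 c
  have hb0 := cantorMap_nonneg hl0 hl1.le b
  have hc0 := cantorMap_nonneg hl0 hl1.le c
  cases hb : b 0 <;> cases hc : c 0 <;> simp only [hb, hc, ne_eq, not_true] at hbc
  · have := cantorMap_le_of_head_false hl0 hl1 hb
    have := le_cantorMap_of_head_true hl0 hl1 hc
    rcases hd with hd | hd <;> intro h <;> linarith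
  · have := le_cantorMap_of_head_true hl0 hl1 hb
    have := cantorMap_le_of_head_false hl0 hl1 hc
    rcases hd with hd | hd <;> intro h <;> linarith

theorem head_eq_of_cantorMap_add_eq_two_mul {l : ℝ} (hl0 : 0 ≤ l) (hl2 : l < 1 / 2)
    {b c d : ℕ → Bool} (hbc : b 0 = c 0)
    (h : cantorMap l b + cantorMap l c = 2 * cantorMap l d) : d 0 = b 0 := by
  have hl1 : l < 1 := by linarith
  by_contra hne
  cases hb : b 0 <;> rw [hb] at hbc hne
  · have := cantorMap_le_of_head_false hl0 hl1 hb
    have := cantorMap_le_of_head_false hl0 hl1 hbc.symm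
    have := le_cantorMap_of_head_true hl0 hl1 (by simpa using hne)
    linarith
  · have := le_cantorMap_of_head_true hl0 hl1 hb
    have := le_cantorMap_of_head_true hl0 hl1 hbc.symm
    have := cantorMap_le_of_head_false hl0 hl1 (by simpa using hne)
    linarith

theorem cantorMap_tail_add_eq_two_mul {l : ℝ} (hl0 : 0 < l) (hl1 : l < 1)
    {b c d : ℕ → Bool} (hbc : b 0 = c 0) (hdb : d 0 = b 0)
    (h : cantorMap l b + cantorMap l c = 2 * cantorMap l d) :
    cantorMap l (fun n => b (n + 1)) + cantorMap l (fun n => c (n + 1))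
      = 2 * cantorMap l (fun n => d (n + 1)) := by
  rw [cantorMap_eq_head_add_tail hl0.le hl1 b, cantorMap_eq_head_add_tail hl0.le hl1 c,
    cantorMap_eq_head_add_tail hl0.le hl1 d, ← hbc, hdb] at h
  apply mul_left_cancel₀ hl0.ne'
  linarith

theorem cantorMap_add_ne_two_mul_of_first_ne {l : ℝ} (hl0 : 0 < l) (hl3 : l < 1 / 3)
    (N : ℕ) {b c : ℕ → Bool} (hlt : ∀ n < N, b n = c n) (hN : b N ≠ c N) (d : ℕ → Bool) :
    cantorMap l b + cantorMap l c ≠ 2 * cantorMap l d := by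
  induction N generalizing b c d with
  | zero => exact cantorMap_add_ne_two_mul_of_head_ne hl0.le hl3 hN d
  | succ N ih =>
    intro h
    have hbc : b 0 = c 0 := hlt 0 N.succ_pos
    have hdb := head_eq_of_cantorMap_add_eq_two_mul hl0.le (by linarith) hbc h
    exact ih (fun n hn => hlt (n + 1) (Nat.succ_lt_succ hn)) hN (fun n => d (n + 1))
      (cantorMap_tail_add_eq_two_mul hl0 (by linarith) hbc hdb h)

theorem cantorMap_add_ne_two_mul_of_ne {l : ℝ} (hl0 : 0 < l) (hl3 : l < 1 / 3)
    {b c : ℕ → Bool} (hbc : b ≠ c) (d : ℕ → Bool) :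
    cantorMap l b + cantorMap l c ≠ 2 * cantorMap l d := by
  have hex : ∃ n, b n ≠ c n := Function.ne_iff.mp hbc
  exact cantorMap_add_ne_two_mul_of_first_ne hl0 hl3 (Nat.find hex)
    (fun n hn => not_not.mp (Nat.find_min hex hn)) (Nat.find_spec hex) d

end MiddleCantor

theorem stmt16 (ε : ℝ) (h1 : 1 / 3 < ε) (h2 : ε < 1) :
    ¬ ∃ a t : ℝ, 0 < t ∧ a ∈ middleCantor ε ∧ a + t ∈ middleCantor ε ∧
      a + 2 * t ∈ middleCantor ε := by
  rintro ⟨a, t, ht, ⟨b, hb⟩, ⟨d, hd⟩, ⟨c, hc⟩⟩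
  change a = MiddleCantor.cantorMap ((1 - ε) / 2) b at hb
  change a + t = MiddleCantor.cantorMap ((1 - ε) / 2) d at hd
  change a + 2 * t = MiddleCantor.cantorMap ((1 - ε) / 2) c at hc
  have hbc : b ≠ c := by
    rintro rfl
    linarith
  exact MiddleCantor.cantorMap_add_ne_two_mul_of_ne (l := (1 - ε) / 2) (by linarith) (by linarith)
    hbc d (by rw [← hb, ← hc, ← hd]; ring)
end

section
/- For every ε with 0 < ε ≤ 1/3, the middle-ε Cantor set M_ε contains an arithmetic progression of length 4: there exists t > 0 such that 1/2 − 3t, 1/2 − t, 1/2 + t, and 1/2 + 3t all belong to M_ε. -/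
/-!
Write `l = (1 - ε) / 2` and `S = {∑ bₙ lⁿ}`, so that `M_ε = (1 - l) S`; complementing the bits shows
that `M_ε` is symmetric about `1/2`. Hence it suffices to find `x ∈ M_ε` with `x < 1/2` and
`3x - 1 ∈ M_ε`: then `t = 1/2 - x`. Taking `x = (1 - l) l U` and `3x - 1 = (1 - l) V` with
`U, V ∈ S`, this amounts to `-1/(1 - l) ∈ S - 3lS`. Now `S - 3lS` is the attractor of the
iterated function system `r ↦ l r + d` with digits `d ∈ {0, 1, -3l, 1 - 3l}`, and for `l ≥ 1/3`
the four images of `I = [-3l/(1 - l), 1/(1 - l)]` cover `I`, so a greedy expansion represents every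
point of `I`.
-/

open Set

theorem exists_hasSum_digit_mul_pow {ι : Type*} {l : ℝ} (hl₀ : l ≠ 0) (hl₁ : |l| < 1)
    (digit : ι → ℝ) {I : Set ℝ} (hI : Bornology.IsBounded I)
    (hcover : ∀ r ∈ I, ∃ i, (r - digit i) / l ∈ I) {r : ℝ} (hr : r ∈ I) :
    ∃ w : ℕ → ι, HasSum (fun n => digit (w n) * l ^ n) r := by
  choose i hi using hcover
  let step : I → I := fun x => ⟨(x - digit (i x x.2)) / l, hi x x.2⟩
  let orbit : ℕ → I := fun n => step^[n] ⟨r, hr⟩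
  refine ⟨fun n => i (orbit n) (orbit n).2, ?_⟩
  let g : ℕ → ℝ := fun n => l ^ n * orbit n
  have hg₀ : g 0 = r := by simp [g, orbit]
  have hdigit : ∀ n, digit (i (orbit n) (orbit n).2) * l ^ n = g n - g (n + 1) := by
    intro n
    simp only [g, orbit, Function.iterate_succ_apply', step]
    field_simp
    ring
  obtain ⟨C, hC⟩ := hI.exists_norm_le
  have hg : Summable g := by
    refine Summable.of_norm_bounded
      ((summable_geometric_of_lt_one (abs_nonneg l) hl₁).mul_left C) fun n => ?_
    rw [norm_mul, norm_pow, Real.norm_eq_abs, mul_comm]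
    exact mul_le_mul_of_nonneg_right (hC _ (orbit n).2) (pow_nonneg (abs_nonneg l) n)
  clear_value g
  have htail : HasSum (fun n => g (n + 1)) (∑' n, g n - g 0) := by
    simpa using (hasSum_nat_add_iff' 1).2 hg.hasSum
  simpa only [hdigit, sub_sub_cancel, hg₀] using hg.hasSum.sub htail

noncomputable def bitSeries (l : ℝ) (b : ℕ → Bool) : ℝ :=
  ∑' n, if b n then l ^ n else 0

def pairDigit (l : ℝ) (p : Bool × Bool) : ℝ :=
  (if p.1 then 1 else 0) - 3 * l * (if p.2 then 1 else 0)

section bitSeries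

variable {l : ℝ}

theorem summable_bitSeries (hl : |l| < 1) (b : ℕ → Bool) :
    Summable fun n => if b n then l ^ n else 0 :=
  (summable_geometric_of_abs_lt_one hl).indicator {n | b n} |>.congr fun n => by
    simp [Set.indicator]

theorem bitSeries_le (hl₀ : 0 ≤ l) (hl₁ : l < 1) (b : ℕ → Bool) :
    bitSeries l b ≤ (1 - l)⁻¹ := by
  rw [← tsum_geometric_of_lt_one hl₀ hl₁]
  refine (summable_bitSeries (abs_lt.2 ⟨by linarith, hl₁⟩) b).tsum_le_tsum (fun n => ?_)
    (summable_geometric_of_lt_one hl₀ hl₁)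
  split_ifs
  exacts [le_rfl, pow_nonneg hl₀ n]

theorem bitSeries_not (hl : |l| < 1) (b : ℕ → Bool) :
    bitSeries l (fun n => !b n) = (1 - l)⁻¹ - bitSeries l b := by
  rw [← tsum_geometric_of_abs_lt_one hl, bitSeries, bitSeries,
    ← (summable_geometric_of_abs_lt_one hl).tsum_sub (summable_bitSeries hl b)]
  congr 1 with n
  cases b n <;> simp

theorem bitSeries_cons (hl : |l| < 1) (b : ℕ → Bool) :
    bitSeries l (fun | 0 => false | n + 1 => b n) = l * bitSeries l b := by
  rw [bitSeries, (summable_bitSeries hl _).tsum_eq_zero_add, bitSeries, ← tsum_mul_left]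
  refine (zero_add _).trans (tsum_congr fun n => ?_)
  cases hb : b n <;> simp [hb, pow_succ']

theorem exists_pairDigit_div_mem_Icc (hl₀ : 1 / 3 ≤ l) (hl₁ : l < 1) {r : ℝ}
    (hr : r ∈ Icc (-3 * l * (1 - l)⁻¹) (1 - l)⁻¹) :
    ∃ p, (r - pairDigit l p) / l ∈ Icc (-3 * l * (1 - l)⁻¹) (1 - l)⁻¹ := by
  set s := (1 - l)⁻¹
  have hl : 0 < l := by linarith
  have hs₀ : 0 < s := inv_pos.2 (by linarith)
  have hs : l * s = s - 1 := by
    linear_combination -inv_mul_cancel₀ (show 1 - l ≠ 0 by linarith)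
  have hs' : 1 ≤ (1 + 3 * l) * (l * s) := by
    nlinarith [mul_nonneg (mul_nonneg hs₀.le (by linarith : 0 ≤ 3 * l - 1))
      (by linarith : 0 ≤ l + 1)]
  simp only [mem_Icc, le_div_iff₀ hl, div_le_iff₀ hl, pairDigit] at hr ⊢
  obtain ⟨hr₀, hr₁⟩ := hr
  -- greedy choice: the largest digit `d` with `r - d ≥ l * (-3 * l * s)`
  by_cases h1 : 1 - 3 * l * (l * s) ≤ r
  · exact ⟨(true, false), by norm_num; constructor <;> nlinarith⟩
  by_cases h0 : - 3 * l * (l * s) ≤ r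
  · exact ⟨(false, false), by norm_num; constructor <;> nlinarith⟩
  by_cases h2 : 1 - 3 * l - 3 * l * (l * s) ≤ r
  · exact ⟨(true, true), by norm_num; constructor <;> nlinarith⟩
  · exact ⟨(false, true), by norm_num; constructor <;> nlinarith⟩

theorem exists_bitSeries_sub_three_mul_bitSeries_eq (hl₀ : 1 / 3 ≤ l) (hl₁ : l < 1) {r : ℝ}
    (hr : r ∈ Icc (-3 * l * (1 - l)⁻¹) (1 - l)⁻¹) :
    ∃ u v : ℕ → Bool, bitSeries l v - 3 * l * bitSeries l u = r := by
  have habs : |l| < 1 := abs_lt.2 ⟨by linarith, hl₁⟩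
  obtain ⟨w, hw⟩ := exists_hasSum_digit_mul_pow (by linarith) habs (pairDigit l)
    (Metric.isBounded_Icc _ _) (fun r hr => exists_pairDigit_div_mem_Icc hl₀ hl₁ hr) hr
  refine ⟨fun n => (w n).2, fun n => (w n).1, (hw.unique ?_).symm⟩
  have hsplit : ∀ p n, pairDigit l p * l ^ n
      = (if p.1 then l ^ n else 0) - 3 * l * (if p.2 then l ^ n else 0) := by
    rintro ⟨_ | _, _ | _⟩ n <;> simp [pairDigit, sub_mul, mul_assoc]
  simpa only [hsplit, bitSeries] using
    (summable_bitSeries habs _).hasSum.sub ((summable_bitSeries habs _).hasSum.mul_left (3 * l))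

end bitSeries

theorem mul_bitSeries_mem_middleCantor (ε : ℝ) (b : ℕ → Bool) :
    (1 - (1 - ε) / 2) * bitSeries ((1 - ε) / 2) b ∈ middleCantor ε :=
  ⟨b, rfl⟩

theorem one_sub_mem_middleCantor {ε : ℝ} (h₀ : -1 < ε) (h₁ : ε < 3) {x : ℝ}
    (hx : x ∈ middleCantor ε) : 1 - x ∈ middleCantor ε := by
  obtain ⟨b, rfl⟩ := hx
  have hl : |(1 - ε) / 2| < 1 := abs_lt.2 ⟨by linarith, by linarith⟩
  convert mul_bitSeries_mem_middleCantor ε (fun n => !b n) using 1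
  rw [bitSeries_not hl, mul_sub, mul_inv_cancel₀ (by linarith)]
  rfl

theorem stmt17 (ε : ℝ) (h1 : 0 < ε) (h2 : ε ≤ 1 / 3) :
    ∃ t : ℝ, 0 < t ∧ 1 / 2 - 3 * t ∈ middleCantor ε ∧ 1 / 2 - t ∈ middleCantor ε ∧
      1 / 2 + t ∈ middleCantor ε ∧ 1 / 2 + 3 * t ∈ middleCantor ε := by
  set l := (1 - ε) / 2 with hl
  have hl₀ : 1 / 3 ≤ l := by linarith
  have hl₁ : l < 1 / 2 := by linarith
  have habs : |l| < 1 := abs_lt.2 ⟨by linarith, by linarith⟩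
  have hs₀ : 0 < (1 - l)⁻¹ := inv_pos.2 (by linarith)
  have hs : (1 - l) * (1 - l)⁻¹ = 1 := mul_inv_cancel₀ (by linarith)
  obtain ⟨u, v, huv⟩ := exists_bitSeries_sub_three_mul_bitSeries_eq hl₀ (by linarith)
    (r := -(1 - l)⁻¹) ⟨by nlinarith, by linarith⟩
  have hx := mul_bitSeries_mem_middleCantor ε (fun | 0 => false | n + 1 => u n)
  have h3x := mul_bitSeries_mem_middleCantor ε v
  rw [← hl, bitSeries_cons habs] at hx
  rw [← hl] at h3x
  clear_value l
  have hU := bitSeries_le (by linarith) (by linarith) u (l := l)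
  refine ⟨1 / 2 - (1 - l) * (l * bitSeries l u), ?_, ?_, ?_, ?_, ?_⟩
  · nlinarith [mul_le_mul_of_nonneg_left hU (by nlinarith : 0 ≤ (1 - l) * l)]
  · convert h3x using 1; linear_combination -(1 - l) * huv + hs
  · convert hx using 1; ring
  · convert one_sub_mem_middleCantor (by linarith) (by linarith) hx using 1; ring
  · convert one_sub_mem_middleCantor (by linarith) (by linarith) h3x using 1
    linear_combination (1 - l) * huv - hs
end
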